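/- arXiv:2106.15660 — 9 statements merged into one kernel-verified Lean document; each statement's English description precedes it below -/
import Mathlib

section
/- Let X be an n-dimensional p-Banach space (0 < p ≤ 1) and I : X → X the identity map. Then for every k ∈ ℕ, the k-th dyadic entropy number satisfies 2^{(1-k)/n} ≤ e_k(I) ≤ 4^{1/p} · 2^{(1-k)/n}. -/
/-!
Both bounds compare volumes after transporting `X` to `ℝⁿ`. Since `N ^ p` is dominated by
`∑ |xᵢ| ^ p N(eᵢ) ^ p`, `N` is continuous, its unit ball `B` is compact with nonempty interior,
and `vol (x + r • B) = rⁿ vol B`. If `2^(k-1)` translates of `ε • B` cover `B`, then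
`2^(k-1) εⁿ ≥ 1`: this is the lower bound. For the upper bound, put `L = 2^((1-k)/n)` and
`q = 4^(1/p) L` (if `q ≥ 1` a single centre at `0` works). A maximal `q`-separated subset of `B`
is a `q`-net, and by the `p`-triangle inequality the balls of radius `r = 2^(1/p) L` around its
points are disjoint and lie in `(r / L) • B`, so it has at most `(1 / L)ⁿ = 2^(k-1)` points.
-/

open Real MeasureTheory Metric Set Filter Topology Module Pointwise

section PNorm

variable {E F : Type*}

theorem Finset.exists_fin_forall_exists_eq {α : Type*} [Nonempty α] (s : Finset α) {m : ℕ}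
    (h : s.card ≤ m) : ∃ c : Fin m → α, ∀ a ∈ s, ∃ i, c i = a := by
  classical
  refine ⟨fun i => if hi : (i : ℕ) < s.card then s.equivFin.symm ⟨i, hi⟩
    else Classical.arbitrary α, fun a ha => ⟨Fin.castLE h (s.equivFin ⟨a, ha⟩), by simp⟩⟩

theorem ENNReal.le_of_ofReal_mul_le_ofReal_mul {a b : ℝ} {v : ENNReal} (hb : 0 ≤ b) (hv0 : v ≠ 0)
    (hv : v ≠ ⊤) (h : ENNReal.ofReal a * v ≤ ENNReal.ofReal b * v) : a ≤ b :=
  (ENNReal.ofReal_le_ofReal_iff hb).1 ((ENNReal.mul_le_mul_iff_left hv0 hv).1 h)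

structure IsPNorm [AddCommGroup E] [Module ℝ E] (p : ℝ) (N : E → ℝ) : Prop where
  nonneg : ∀ x, 0 ≤ N x
  eq_zero_iff : ∀ x, N x = 0 ↔ x = 0
  map_smul : ∀ (c : ℝ) x, N (c • x) = |c| * N x
  rpow_add_le : ∀ x y, N (x + y) ^ p ≤ N x ^ p + N y ^ p

section Covering

variable [AddCommGroup E] [AddCommGroup F]

def closedPBall (N : E → ℝ) (x : E) (r : ℝ) : Set E := {y | N (y - x) ≤ r}

/-- The `k`-th entropy number of the identity of `(E, N)` is
`sInf (coveringRadii N (2 ^ (k - 1)))`. -/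
def coveringRadii (N : E → ℝ) (m : ℕ) : Set ℝ :=
  {ε | 0 < ε ∧ ∃ c : Fin m → E, ∀ x, N x ≤ 1 → ∃ i, N (x - c i) ≤ ε}

theorem coveringRadii_comp_addEquiv (e : F ≃+ E) (N : E → ℝ) (m : ℕ) :
    coveringRadii (N ∘ e) m = coveringRadii N m := by
  ext ε
  refine and_congr_right fun _ => ⟨fun ⟨c, hc⟩ => ⟨e ∘ c, fun x hx => ?_⟩,
    fun ⟨c, hc⟩ => ⟨e.symm ∘ c, fun x hx => ?_⟩⟩
  · obtain ⟨i, hi⟩ := hc (e.symm x) (by simpa using hx)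
    exact ⟨i, by simpa using hi⟩
  · obtain ⟨i, hi⟩ := hc (e x) hx
    exact ⟨i, by simpa using hi⟩

theorem mem_coveringRadii_of_one_le {N : E → ℝ} {m : ℕ} (hm : 0 < m) {ε : ℝ} (hε : 1 ≤ ε) :
    ε ∈ coveringRadii N m :=
  ⟨one_pos.trans_le hε, fun _ => 0, fun x hx => ⟨⟨0, hm⟩, by simpa using hx.trans hε⟩⟩

end Covering

namespace IsPNorm

section Algebraic

variable [AddCommGroup E] [Module ℝ E] [AddCommGroup F] [Module ℝ F]
  {p : ℝ} {N : E → ℝ} (hN : IsPNorm p N)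
include hN

theorem map_zero : N 0 = 0 := (hN.eq_zero_iff 0).2 rfl

theorem map_neg (x : E) : N (-x) = N x := by simpa using hN.map_smul (-1) x

theorem map_sub_comm (x y : E) : N (x - y) = N (y - x) := by rw [← neg_sub, hN.map_neg]

theorem rpow_sub_le (x y : E) : N x ^ p - N y ^ p ≤ N (x - y) ^ p := by
  have := hN.rpow_add_le (x - y) y
  rw [sub_add_cancel] at this
  linarith

theorem rpow_sum_le (hp : 0 < p) {ι : Type*} (s : Finset ι) (f : ι → E) :
    N (∑ i ∈ s, f i) ^ p ≤ ∑ i ∈ s, N (f i) ^ p := by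
  induction s using Finset.cons_induction with
  | empty => simp [hN.map_zero, zero_rpow hp.ne']
  | cons a s ha ih =>
    rw [Finset.sum_cons, Finset.sum_cons]
    exact (hN.rpow_add_le _ _).trans (by linarith)

theorem le_iff_rpow_le (hp : 0 < p) (x : E) {r : ℝ} (hr : 0 ≤ r) : N x ≤ r ↔ N x ^ p ≤ r ^ p :=
  (rpow_le_rpow_iff (hN.nonneg x) hr hp).symm

theorem rpow_le_sum_coord (hp : 0 < p) {ι : Type*} [Fintype ι] (b : Basis ι ℝ E) (x : E) :
    N x ^ p ≤ ∑ i, |b.equivFun x i| ^ p * N (b i) ^ p := by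
  conv_lhs => rw [← b.sum_equivFun x]
  refine (hN.rpow_sum_le hp _ _).trans_eq (Finset.sum_congr rfl fun i _ => ?_)
  rw [hN.map_smul, mul_rpow (abs_nonneg _) (hN.nonneg _)]

theorem comp_linearEquiv (e : F ≃ₗ[ℝ] E) : IsPNorm p (N ∘ e) where
  nonneg x := hN.nonneg (e x)
  eq_zero_iff x := by simp [hN.eq_zero_iff]
  map_smul c x := by simp [hN.map_smul]
  rpow_add_le x y := by simpa using hN.rpow_add_le (e x) (e y)

theorem mem_coveringRadii_of_card_le {m : ℕ} {q : ℝ} (hq : 0 < q)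
    (h : ∀ s : Finset E, (∀ a ∈ s, N a ≤ 1) → (s : Set E).Pairwise (fun a b => q < N (a - b)) →
      s.card ≤ m) :
    q ∈ coveringRadii N m := by
  classical
  obtain ⟨s, ⟨hs1, hsep⟩, hmax⟩ := (measure fun s : Finset E => m - s.card).wf.has_min
    {s | (∀ a ∈ s, N a ≤ 1) ∧ (s : Set E).Pairwise (fun a b => q < N (a - b))}
    ⟨∅, by simp, by simp⟩
  -- a point of the unit ball far from all of `s` could be added to `s`
  have hcover : ∀ x, N x ≤ 1 → ∃ a ∈ s, N (x - a) ≤ q := by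
    intro x hx
    by_contra! hfar
    have hxs : x ∉ s := fun hxs => by simpa [hN.map_zero, hq.not_gt] using hfar x hxs
    have hins : (∀ a ∈ insert x s, N a ≤ 1) ∧
        (↑(insert x s) : Set E).Pairwise (fun a b => q < N (a - b)) := by
      refine ⟨by simpa [hx] using hs1, ?_⟩
      rw [Finset.coe_insert]
      exact hsep.insert fun b hb _ => ⟨hfar b hb, hN.map_sub_comm x b ▸ hfar b hb⟩
    refine hmax _ hins ?_
    have := h _ hins.1 hins.2
    show m - (insert x s).card < m - s.card
    rw [Finset.card_insert_of_notMem hxs] at this ⊢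
    omega
  obtain ⟨c, hc⟩ := s.exists_fin_forall_exists_eq (h s hs1 hsep)
  refine ⟨hq, c, fun x hx => ?_⟩
  obtain ⟨a, has, hxa⟩ := hcover x hx
  obtain ⟨i, rfl⟩ := hc a has
  exact ⟨i, hxa⟩

end Algebraic

section Topology

variable [NormedAddCommGroup E] [NormedSpace ℝ E] [FiniteDimensional ℝ E]
  {p : ℝ} {N : E → ℝ} (hN : IsPNorm p N) (hp : 0 < p)
include hN hp

theorem continuous_rpow : Continuous fun x => N x ^ p := by
  let b := Module.finBasis ℝ E
  let g : E → ℝ := fun x => ∑ i, |b.equivFun x i| ^ p * N (b i) ^ p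
  have hg : Continuous g := by
    have := LinearMap.continuous_of_finiteDimensional b.equivFun.toLinearMap
    refine continuous_finsetSum _ fun i _ => ?_
    exact (((continuous_apply i).comp this).abs.rpow_const fun _ => Or.inr hp.le).mul
      continuous_const
  have hg0 : g 0 = 0 := by simp [g, zero_rpow hp.ne']
  refine continuous_iff_continuousAt.2 fun x => ?_
  have hlim : Tendsto (fun y => g (y - x)) (𝓝 x) (𝓝 0) := by
    simpa [Function.comp_def, hg0] using (hg.comp (continuous_sub_right x)).tendsto x
  -- `|N y ^ p - N x ^ p| ≤ N (y - x) ^ p`, and the latter is dominated by `g (y - x)`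
  refine tendsto_iff_dist_tendsto_zero.2 (squeeze_zero (fun _ => dist_nonneg) (fun y => ?_) hlim)
  rw [Real.dist_eq, abs_sub_le_iff]
  refine ⟨(hN.rpow_sub_le y x).trans (hN.rpow_le_sum_coord hp b _), ?_⟩
  have hxy := hN.rpow_sub_le x y
  rw [hN.map_sub_comm] at hxy
  exact hxy.trans (hN.rpow_le_sum_coord hp b _)

theorem continuous : Continuous N := by
  have := (hN.continuous_rpow hp).rpow_const (p := p⁻¹) fun _ => Or.inr (inv_nonneg.2 hp.le)
  simpa [rpow_rpow_inv (hN.nonneg _) hp.ne'] using this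

theorem exists_pos_mul_norm_le : ∃ c, 0 < c ∧ ∀ x, c * ‖x‖ ≤ N x := by
  rcases subsingleton_or_nontrivial E with hE | hE
  · exact ⟨1, one_pos, fun x => by simp [Subsingleton.elim x 0, hN.map_zero]⟩
  obtain ⟨z, hz, hmin⟩ := (isCompact_sphere (0 : E) 1).exists_isMinOn
    (NormedSpace.sphere_nonempty.2 zero_le_one) (hN.continuous hp).continuousOn
  have hz0 : z ≠ 0 := ne_zero_of_mem_unit_sphere ⟨z, hz⟩
  refine ⟨N z, (hN.nonneg z).lt_of_ne (Ne.symm ((hN.eq_zero_iff z).not.2 hz0)), fun x => ?_⟩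
  rcases eq_or_ne x 0 with rfl | hx
  · simp [hN.map_zero]
  have hxs : ‖x‖⁻¹ • x ∈ sphere (0 : E) 1 := by simp [norm_smul, hx]
  calc N z * ‖x‖ ≤ N (‖x‖⁻¹ • x) * ‖x‖ := mul_le_mul_of_nonneg_right (hmin hxs) (norm_nonneg x)
    _ = N x := by
      rw [hN.map_smul, abs_inv, abs_norm, mul_comm, mul_inv_cancel_left₀ (norm_ne_zero_iff.2 hx)]

theorem isCompact_closedPBall (x : E) (r : ℝ) : IsCompact (closedPBall N x r) := by
  obtain ⟨c, hc, hle⟩ := hN.exists_pos_mul_norm_le hp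
  refine Metric.isCompact_of_isClosed_isBounded
    (isClosed_le ((hN.continuous hp).comp (continuous_sub_right x)) continuous_const)
    ((isBounded_closedBall (x := x) (r := r / c)).subset fun y hy => ?_)
  rw [mem_closedBall, dist_eq_norm, le_div_iff₀' hc]
  exact (hle _).trans hy

end Topology

section Volume

variable [NormedAddCommGroup E] [NormedSpace ℝ E] [FiniteDimensional ℝ E]
  {p : ℝ} {N : E → ℝ} (hN : IsPNorm p N)
include hN

theorem measure_closedPBall [MeasurableSpace E] [BorelSpace E] (μ : Measure E)
    [μ.IsAddHaarMeasure] (x : E) {r : ℝ} (hr : 0 < r) :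
    μ (closedPBall N x r) = ENNReal.ofReal (r ^ finrank ℝ E) * μ (closedPBall N 0 1) := by
  have hball : closedPBall N x r = x +ᵥ r • closedPBall N 0 1 := by
    ext y
    rw [mem_vadd_set_iff_neg_vadd_mem, mem_smul_set_iff_inv_smul_mem₀ hr.ne']
    simp only [closedPBall, mem_ofPred_eq, sub_zero, vadd_eq_add, hN.map_smul, abs_inv,
      abs_of_pos hr, inv_mul_le_iff₀ hr, mul_one, neg_add_eq_sub]
  rw [hball, measure_vadd, Measure.addHaar_smul, abs_of_pos (pow_pos hr _)]

variable (hp : 0 < p)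
include hp

theorem measure_closedPBall_pos [MeasurableSpace E] (μ : Measure E) [μ.IsOpenPosMeasure]
    (x : E) {r : ℝ} (hr : 0 < r) : 0 < μ (closedPBall N x r) := by
  have hopen : IsOpen {y | N (y - x) < r} :=
    isOpen_lt ((hN.continuous hp).comp (continuous_sub_right x)) continuous_const
  exact (hopen.measure_pos μ ⟨x, by simpa [hN.map_zero] using hr⟩).trans_le
    (measure_mono fun _ hy => le_of_lt (α := ℝ) hy)

theorem one_le_mul_pow_of_mem_coveringRadii {m : ℕ} {ε : ℝ} (hε : ε ∈ coveringRadii N m) :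
    1 ≤ m * ε ^ finrank ℝ E := by
  obtain ⟨hε0, c, hc⟩ := hε
  borelize E
  let μ : Measure E := Measure.addHaar
  have hcover : closedPBall N 0 1 ⊆ ⋃ i, closedPBall N (c i) ε := fun x hx =>
    mem_iUnion.2 (hc x (by simpa [closedPBall] using hx))
  refine ENNReal.le_of_ofReal_mul_le_ofReal_mul (by positivity)
    (hN.measure_closedPBall_pos hp μ 0 one_pos).ne'
    (hN.isCompact_closedPBall hp 0 1).measure_lt_top.ne ?_
  calc ENNReal.ofReal 1 * μ (closedPBall N 0 1) ≤ μ (⋃ i, closedPBall N (c i) ε) := by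
        simpa using measure_mono hcover
    _ ≤ ∑ i, μ (closedPBall N (c i) ε) := measure_iUnion_fintype_le μ _
    _ = ENNReal.ofReal (m * ε ^ finrank ℝ E) * μ (closedPBall N 0 1) := by
      simp [hN.measure_closedPBall μ _ hε0, ENNReal.ofReal_mul, mul_assoc]

theorem card_mul_pow_le (s : Finset E) (hs : ∀ a ∈ s, N a ≤ 1) {r ρ : ℝ} (hr : 0 < r)
    (hρ : 0 < ρ) (hrρ : 1 + r ^ p ≤ ρ ^ p)
    (hsep : (s : Set E).Pairwise fun a b => 2 * r ^ p < N (a - b) ^ p) :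
    s.card * r ^ finrank ℝ E ≤ ρ ^ finrank ℝ E := by
  borelize E
  let μ : Measure E := Measure.addHaar
  have hdisj : (s : Set E).PairwiseDisjoint fun a => closedPBall N a r := by
    refine fun a ha b hb hab =>
      disjoint_left.2 fun y (hya : N (y - a) ≤ r) (hyb : N (y - b) ≤ r) => ?_
    have hab' := hN.rpow_add_le (a - y) (y - b)
    rw [sub_add_sub_cancel, hN.map_sub_comm a y] at hab'
    have := hsep ha hb hab
    linarith [(hN.le_iff_rpow_le hp _ hr.le).1 hya, (hN.le_iff_rpow_le hp _ hr.le).1 hyb]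
  have hsub : ⋃ a ∈ s, closedPBall N a r ⊆ closedPBall N 0 ρ := by
    refine iUnion₂_subset fun a ha y (hya : N (y - a) ≤ r) => ?_
    have hy := hN.rpow_add_le a (y - a)
    rw [add_sub_cancel] at hy
    rw [show y ∈ closedPBall N 0 ρ ↔ N y ≤ ρ by simp [closedPBall], hN.le_iff_rpow_le hp _ hρ.le]
    linarith [(hN.le_iff_rpow_le hp _ hr.le).1 hya,
      (hN.le_iff_rpow_le hp _ zero_le_one).1 (hs a ha), one_rpow p]
  refine ENNReal.le_of_ofReal_mul_le_ofReal_mul (by positivity)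
    (hN.measure_closedPBall_pos hp μ 0 one_pos).ne'
    (hN.isCompact_closedPBall hp 0 1).measure_lt_top.ne ?_
  calc ENNReal.ofReal (s.card * r ^ finrank ℝ E) * μ (closedPBall N 0 1)
        = ∑ a ∈ s, μ (closedPBall N a r) := by
        simp [hN.measure_closedPBall μ _ hr, ENNReal.ofReal_mul, mul_assoc]
    _ = μ (⋃ a ∈ s, closedPBall N a r) := (measure_biUnion_finset hdisj fun a _ =>
        (hN.isCompact_closedPBall hp a r).isClosed.measurableSet).symm
    _ ≤ μ (closedPBall N 0 ρ) := measure_mono hsub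
    _ = ENNReal.ofReal (ρ ^ finrank ℝ E) * μ (closedPBall N 0 1) := hN.measure_closedPBall μ 0 hρ

end Volume

section Entropy

variable [NormedAddCommGroup E] [NormedSpace ℝ E] [FiniteDimensional ℝ E]
  {p : ℝ} {N : E → ℝ} (hN : IsPNorm p N) (hp : 0 < p)
include hN hp

theorem le_sInf_coveringRadii (hd : finrank ℝ E ≠ 0) {m : ℕ} {L : ℝ}
    (hLm : L ^ finrank ℝ E * m = 1) : L ≤ sInf (coveringRadii N m) := by
  have hm : 0 < m := Nat.pos_of_ne_zero (by rintro rfl; simp at hLm)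
  refine le_csInf ⟨1, mem_coveringRadii_of_one_le hm le_rfl⟩ fun ε hε => ?_
  have hvol := hN.one_le_mul_pow_of_mem_coveringRadii hp hε
  refine le_of_pow_le_pow_left₀ hd hε.1.le (le_of_mul_le_mul_right ?_ (Nat.cast_pos.2 hm))
  linarith

theorem sInf_coveringRadii_le {m : ℕ} (hm : 0 < m) {L : ℝ} (hL : 0 < L)
    (hLm : L ^ finrank ℝ E * m = 1) : sInf (coveringRadii N m) ≤ 4 ^ (1 / p) * L := by
  set q := 4 ^ (1 / p) * L
  have hq : 0 < q := by positivity
  refine csInf_le ⟨0, fun _ h => h.1.le⟩ ?_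
  rcases le_or_gt 1 q with hq1 | hq1
  · exact mem_coveringRadii_of_one_le hm hq1
  refine hN.mem_coveringRadii_of_card_le hq fun s hs hsep => ?_
  have rpow_mul_eq (c : ℝ) (hc : 0 ≤ c) : (c ^ (1 / p) * L) ^ p = c * L ^ p := by
    rw [mul_rpow (by positivity) hL.le, ← rpow_mul hc, one_div_mul_cancel hp.ne', rpow_one]
  -- packing balls of radius `r` with `2 r ^ p = q ^ p` inside the ball of radius `r / L`
  set r := 2 ^ (1 / p) * L
  have hr : 0 < r := by positivity
  have hqr : q ^ p = 2 * r ^ p := by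
    rw [rpow_mul_eq 4 (by norm_num), rpow_mul_eq 2 (by norm_num)]
    ring
  have hLp : 4 * L ^ p < 1 := rpow_mul_eq 4 (by norm_num) ▸ rpow_lt_one hq.le hq1 hp
  have hrρ : 1 + r ^ p ≤ (r / L) ^ p := by
    rw [div_rpow hr.le hL.le, rpow_mul_eq 2 (by norm_num), le_div_iff₀ (rpow_pos_of_pos hL p)]
    nlinarith [rpow_pos_of_pos hL p]
  have hpack := hN.card_mul_pow_le hp s hs hr (div_pos hr hL) hrρ fun a ha b hb hab =>
    hqr ▸ rpow_lt_rpow hq.le (hsep ha hb hab) hp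
  have hρ : (r / L) ^ finrank ℝ E = m * r ^ finrank ℝ E := by
    rw [div_pow, div_eq_iff (pow_pos hL _).ne']
    linear_combination (-(r ^ finrank ℝ E)) * hLm
  exact_mod_cast le_of_mul_le_mul_right (hρ ▸ hpack) (pow_pos hr _)

end Entropy

end IsPNorm

end PNorm

theorem stmt_3_general (p : ℝ) (hp0 : 0 < p)
    (X : Type*) [AddCommGroup X] [Module ℝ X]
    (n : ℕ) (hn : 0 < n) (hdim : Module.finrank ℝ X = n) [FiniteDimensional ℝ X]
    (nrm : X → ℝ)
    (hnonneg : ∀ x, 0 ≤ nrm x)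
    (hzero : ∀ x, nrm x = 0 ↔ x = 0)
    (hsmul : ∀ (c : ℝ) (x : X), nrm (c • x) = |c| * nrm x)
    (hptri : ∀ x y : X, nrm (x + y) ^ p ≤ nrm x ^ p + nrm y ^ p)
    (k : ℕ) (hk : 1 ≤ k)
    (ek : ℝ)
    (hek : ek = sInf {ε : ℝ | 0 < ε ∧ ∃ c : Fin (2 ^ (k - 1)) → X,
      ∀ x : X, nrm x ≤ 1 → ∃ i, nrm (x - c i) ≤ ε}) :
    (2 : ℝ) ^ ((1 - (k : ℝ)) / (n : ℝ)) ≤ ek ∧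
      ek ≤ (4 : ℝ) ^ (1 / p) * (2 : ℝ) ^ ((1 - (k : ℝ)) / (n : ℝ)) := by
  let e : X ≃ₗ[ℝ] (Fin n → ℝ) := LinearEquiv.ofFinrankEq X (Fin n → ℝ) (by simp [hdim])
  have hN : IsPNorm p (nrm ∘ e.symm) :=
    (IsPNorm.mk hnonneg hzero hsmul hptri).comp_linearEquiv e.symm
  have hek_cover : ek = sInf (coveringRadii (nrm ∘ e.symm) (2 ^ (k - 1))) :=
    hek.trans (congrArg sInf (coveringRadii_comp_addEquiv e.symm.toAddEquiv nrm _).symm)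
  have hL : ((2 : ℝ) ^ ((1 - (k : ℝ)) / n)) ^ finrank ℝ (Fin n → ℝ) * (2 ^ (k - 1) : ℕ) = 1 := by
    rw [finrank_fin_fun, ← rpow_natCast, ← rpow_mul two_pos.le, div_mul_cancel₀ _ (by positivity),
      Nat.cast_pow, Nat.cast_ofNat, ← rpow_natCast, Nat.cast_sub hk, ← rpow_add two_pos]
    norm_num
  rw [hek_cover]
  exact ⟨hN.le_sInf_coveringRadii hp0 (by simpa using hn.ne') hL,
    hN.sInf_coveringRadii_le hp0 (by positivity) (by positivity) hL⟩

/-- Two-sided estimates for the entropy numbers of the identity map of an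
`n`-dimensional `p`-Banach space: `2^{(1-k)/n} ≤ e_k(I) ≤ 4^{1/p} 2^{(1-k)/n}`. -/
theorem stmt_3 (p : ℝ) (hp0 : 0 < p) (hp1 : p ≤ 1)
    (X : Type*) [AddCommGroup X] [Module ℝ X]
    (n : ℕ) (hn : 0 < n) (hdim : Module.finrank ℝ X = n) [FiniteDimensional ℝ X]
    (nrm : X → ℝ)
    (hnonneg : ∀ x, 0 ≤ nrm x)
    (hzero : ∀ x, nrm x = 0 ↔ x = 0)
    (hsmul : ∀ (c : ℝ) (x : X), nrm (c • x) = |c| * nrm x)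
    (hptri : ∀ x y : X, nrm (x + y) ^ p ≤ nrm x ^ p + nrm y ^ p)
    (k : ℕ) (hk : 1 ≤ k)
    (ek : ℝ)
    (hek : ek = sInf {ε : ℝ | 0 < ε ∧ ∃ c : Fin (2 ^ (k - 1)) → X,
      ∀ x : X, nrm x ≤ 1 → ∃ i, nrm (x - c i) ≤ ε}) :
    (2 : ℝ) ^ ((1 - (k : ℝ)) / (n : ℝ)) ≤ ek ∧
      ek ≤ (4 : ℝ) ^ (1 / p) * (2 : ℝ) ^ ((1 - (k : ℝ)) / (n : ℝ)) :=
  stmt_3_general p hp0 X n hn hdim nrm hnonneg hzero hsmul hptri k hk ek hek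
end

section
/- For every natural number n ≥ 1, √(2π) n^{n+1/2} e^{-n} ≤ n! ≤ √(2π) n^{n+1/2} e^{-n} e^{1/(12n)}. -/
open Real Stirling Filter Nat Topology

lemma my_diff_le (m : ℕ) :
    Real.log (stirlingSeq (m + 1)) - Real.log (stirlingSeq (m + 2)) ≤
      1 / (12 * ((m : ℝ) + 1) * ((m : ℝ) + 2)) := by
  have hm : (0:ℝ) < 2 * (↑(m+1):ℝ) + 1 := by positivity
  set t : ℝ := ((1 : ℝ) / (2 * ↑(m + 1) + 1)) ^ 2 with ht
  have h_nonneg : (0:ℝ) ≤ t := sq_nonneg _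
  have hlt : t < 1 := by
    rw [ht, one_div, inv_pow]
    exact inv_lt_one_of_one_lt₀ (one_lt_pow₀ (lt_add_of_pos_left _ (by positivity)) two_ne_zero)
  have g : HasSum (fun k : ℕ => (1:ℝ)/3 * t ^ (k + 1)) (1/3 * t * (1 - t)⁻¹) := by
    have := (hasSum_geometric_of_lt_one h_nonneg hlt).mul_left ((1:ℝ)/3 * t)
    refine this.congr_fun fun k => ?_
    ring
  have hab (k : ℕ) : (1 : ℝ) / (2 * ↑(k + 1) + 1) * t ^ (k + 1) ≤ (1:ℝ)/3 * t ^ (k + 1) := by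
    have h1 : (1:ℝ) / (2 * ↑(k+1) + 1) ≤ 1/3 := by
      rw [div_le_div_iff₀ (by positivity) (by norm_num)]
      push_cast; linarith [Nat.cast_nonneg (α := ℝ) k]
    exact mul_le_mul_of_nonneg_right h1 (pow_nonneg h_nonneg _)
  have key := hasSum_le hab (log_stirlingSeq_diff_hasSum m) g
  refine key.trans (le_of_eq ?_)
  have h2 : (2 * ((m:ℝ) + 1) + 1) ≠ 0 := by positivity
  rw [ht]
  push_cast
  rw [div_pow, one_pow]
  rw [show (1:ℝ) - 1 / (2 * ((m:ℝ)+1) + 1) ^ 2 = ((2*((m:ℝ)+1)+1)^2 - 1) / (2*((m:ℝ)+1)+1)^2 by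
    field_simp]
  have h3 : ((2*((m:ℝ)+1)+1)^2 - 1) ≠ 0 := by nlinarith [Nat.cast_nonneg (α := ℝ) m]
  field_simp
  ring

lemma my_log_upper (m : ℕ) :
    Real.log (stirlingSeq (m + 1)) ≤ Real.log (√π) + 1 / (12 * ((m : ℝ) + 1)) := by
  set f : ℕ → ℝ := fun k => Real.log (stirlingSeq (k + 1)) - 1 / (12 * ((k : ℝ) + 1)) with hf
  have hmono : Monotone f := by
    apply monotone_nat_of_le_succ
    intro k
    have hs : stirlingSeq (k + 1 + 1) = stirlingSeq (k + 2) := by norm_num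
    simp only [hf, hs]
    push_cast
    have h2 := my_diff_le k
    have heq : (1:ℝ) / (12 * ((k:ℝ)+1)) - 1 / (12 * ((k:ℝ)+2)) =
        1 / (12 * ((k:ℝ)+1) * ((k:ℝ)+2)) := by
      field_simp; ring
    have hk12 : (↑k:ℝ) + 1 + 1 = (k:ℝ) + 2 := by ring
    rw [hk12]
    linarith
  have htend : Tendsto f atTop (𝓝 (Real.log (√π))) := by
    have h1 : Tendsto (fun k : ℕ => Real.log (stirlingSeq (k + 1))) atTop
        (𝓝 (Real.log (√π))) := by
      have := (tendsto_stirlingSeq_sqrt_pi.comp (tendsto_add_atTop_nat 1))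
      exact this.log (by positivity)
    have h2 : Tendsto (fun k : ℕ => 1 / (12 * ((k : ℝ) + 1))) atTop (𝓝 0) := by
      have h3 : Tendsto (fun k : ℕ => (1:ℝ)/12 * (1 / ((k:ℝ) + 1))) atTop (𝓝 ((1/12) * 0)) :=
        tendsto_one_div_add_atTop_nhds_zero_nat.const_mul _
      rw [mul_zero] at h3
      exact h3.congr fun k => by field_simp
    have h6 := h1.sub h2
    rw [sub_zero] at h6
    exact h6
  have := hmono.ge_of_tendsto htend m
  simp only [hf] at this
  linarith

lemma my_lower (m : ℕ) : √π ≤ stirlingSeq (m + 1) := by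
  have htend : Tendsto (stirlingSeq ∘ Nat.succ) atTop (𝓝 (√π)) :=
    tendsto_stirlingSeq_sqrt_pi.comp (tendsto_add_atTop_nat 1)
  exact stirlingSeq'_antitone.le_of_tendsto htend m

/-- Stirling's formula with explicit two-sided bounds. -/
theorem stmt_4 (n : ℕ) (hn : 1 ≤ n) :
    Real.sqrt (2 * π) * (n : ℝ) ^ ((n : ℝ) + 1/2) * Real.exp (-(n : ℝ)) ≤ (n.factorial : ℝ) ∧
    (n.factorial : ℝ) ≤ Real.sqrt (2 * π) * (n : ℝ) ^ ((n : ℝ) + 1/2) * Real.exp (-(n : ℝ)) *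
      Real.exp (1 / (12 * (n : ℝ))) := by
  obtain ⟨m, rfl⟩ : ∃ m, n = m + 1 := ⟨n - 1, by omega⟩
  have hnpos : (0:ℝ) < ((m+1 : ℕ):ℝ) := by positivity
  have hD : (0:ℝ) < √(2 * (m+1 : ℕ)) * (((m+1:ℕ):ℝ) / Real.exp 1) ^ (m+1) := by positivity
  have hfact : (((m+1:ℕ).factorial) : ℝ) =
      stirlingSeq (m+1) * (√(2 * (m+1:ℕ)) * (((m+1:ℕ):ℝ) / Real.exp 1) ^ (m+1)) := by
    rw [stirlingSeq, div_mul_cancel₀]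
    positivity
  have hEq : √(2 * π) * ((m+1:ℕ) : ℝ) ^ (((m+1:ℕ) : ℝ) + 1/2) * Real.exp (-((m+1:ℕ) : ℝ)) =
      √π * (√(2 * (m+1:ℕ)) * (((m+1:ℕ):ℝ) / Real.exp 1) ^ (m+1)) := by
    rw [Real.rpow_add hnpos, Real.rpow_natCast, ← Real.sqrt_eq_rpow,
      Real.sqrt_mul (by norm_num : (0:ℝ) ≤ 2), Real.sqrt_mul (by norm_num : (0:ℝ) ≤ 2),
      div_pow, Real.exp_neg, ← Real.exp_one_pow]
    ring
  have h4 : stirlingSeq (m+1) ≤ √π * Real.exp (1 / (12 * ((m+1:ℕ) : ℝ))) := by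
    have h5 := Real.exp_le_exp.mpr (my_log_upper m)
    rw [Real.exp_log (stirlingSeq'_pos m), Real.exp_add, Real.exp_log (by positivity)] at h5
    refine h5.trans (le_of_eq ?_)
    push_cast
    ring_nf
  constructor
  · rw [hEq, hfact]
    exact mul_le_mul_of_nonneg_right (my_lower m) hD.le
  · rw [hfact, hEq]
    exact le_trans (mul_le_mul_of_nonneg_right h4 hD.le) (le_of_eq (by ring))
end

section
/- Let m ≥ 5 be an integer and n = 2^m. Then there exists a set Ω ⊆ ℤ^n with #Ω ≤ 2^{n/2 - 1} such that for every real sequence (x_i)_{i=1}^n whose non-increasing rearrangement (x_i*) satisfies x*_{⌊2^{j-1}⌋+1} ≤ 2^{ψ(m,j)} for all j ∈ {0,1,...,m-5}, where ψ(m,j) = 2^{m-j-4}(m-j)^{-2}, there exists z ∈ Ω with max_{1≤i≤n} |x_i - z_i| ≤ 4. -/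
/-!
Round `x` coordinatewise to `8 w` with `w i = round (x i / 8)` and put
`t_j = ⌊(2 ^ ψ(m,j) + 4) / 8⌋` for `j ≤ m - 5`. The hypothesis says that at most
`2 ^ (j - 1)` coordinates of `w` exceed `t_j` and none exceeds `t_0`; the `t_j` decrease,
and `t_{m-5} = 0` because `ψ(m, m - 5) = 2/25`. Cutting `w` at these levels writes it as a
sum of `m - 5` layers, the `j`-th with at most `2 ^ j` nonzero entries, all in `[-t_j, t_j]`,
so `Ω` can be taken to be the set of all `8 •` sums of such layers. There are at most
`(e n |V| / s) ^ s` vectors in `ℤ^n` with at most `s` nonzero entries, all in `V`; this bounds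
the number of `j`-th layers by `2 ^ ((m - j + 4 + ψ(m,j)) 2 ^ j)`, and these exponents sum to
at most `11 · 2 ^ (m - 5) + 2 ^ (m - 4) ∑_{t > 5} t⁻² ≤ 2 ^ (m - 1) - 1`.
-/

open Real Finset

/-- 0-indexed: `decRearrange x k` is the `(k+1)`-st largest value among the `|x i|`. -/
noncomputable def decRearrange {n : ℕ} (x : Fin n → ℝ) : Fin n → ℝ :=
  fun k => |x (Tuple.sort (fun j => |x j|) k.rev)|

theorem card_lt_abs_le_of_decRearrange_le {n : ℕ} (x : Fin n → ℝ) {k : Fin n} {b : ℝ}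
    (h : decRearrange x k ≤ b) : #{i | b < |x i|} ≤ k := by
  set σ := Tuple.sort fun j => |x j|
  have hmono : Monotone ((fun j => |x j|) ∘ σ) := Tuple.monotone_sort _
  calc #{i | b < |x i|} ≤ #(Ioi k.rev) := by
        refine card_le_card_of_injOn σ.symm (fun i hi => ?_) σ.symm.injective.injOn
        simp only [coe_filter, mem_univ, true_and, Set.mem_ofPred_eq, coe_Ioi,
          Set.mem_Ioi] at hi ⊢
        by_contra! hle
        have := hmono hle
        simp only [Function.comp_apply, Equiv.apply_symm_apply] at this
        exact (this.trans h).not_gt hi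
    _ = k := by simp only [Fin.card_Ioi, Fin.val_rev]; omega

theorem abs_sub_mul_round_div_le {c : ℝ} (hc : 0 < c) (y : ℝ) :
    |y - c * round (y / c)| ≤ c / 2 := by
  have h : y - c * round (y / c) = c * (y / c - round (y / c)) := by field_simp
  rw [h, abs_mul, abs_of_pos hc]
  nlinarith [abs_sub_round (y / c)]

theorem lt_abs_of_floor_lt_abs_round {B y : ℝ} (h : ⌊(B + 4) / 8⌋ < |round (y / 8)|) :
    B < |y| := by
  have h1 := Int.floor_lt.1 h
  push_cast at h1
  have h2 := abs_sub_mul_round_div_le (c := 8) (by norm_num) y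
  have h3 := abs_sub_abs_le_abs_sub (8 * (round (y / 8) : ℝ)) y
  rw [abs_sub_comm, abs_mul, abs_of_pos (by norm_num : (0 : ℝ) < 8)] at h3
  linarith

theorem sum_choose_mul_pow_le {N s : ℕ} {v : ℝ} (hs : 0 < s) (hsN : s ≤ N) (hv : 1 ≤ v) :
    ∑ k ∈ range (s + 1), (N.choose k : ℝ) * v ^ k ≤ (exp 1 * N * v / s) ^ s := by
  set r : ℝ := N * v / s
  have hs' : (0 : ℝ) < s := by exact_mod_cast hs
  have hr : 1 ≤ r := by
    rw [le_div_iff₀ hs', one_mul]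
    nlinarith [(Nat.cast_le (α := ℝ)).2 hsN]
  calc ∑ k ∈ range (s + 1), (N.choose k : ℝ) * v ^ k
      ≤ ∑ k ∈ range (s + 1), r ^ s * ((s : ℝ) ^ k / k.factorial) := by
        refine sum_le_sum fun k hk => ?_
        calc (N.choose k : ℝ) * v ^ k ≤ (N : ℝ) ^ k / k.factorial * v ^ k := by
              gcongr; exact Nat.choose_le_pow_div k N
          _ = r ^ k * ((s : ℝ) ^ k / k.factorial) := by
              simp only [r, div_pow, mul_pow]; field_simp
          _ ≤ r ^ s * ((s : ℝ) ^ k / k.factorial) := by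
              gcongr
              exact Nat.lt_succ_iff.1 (mem_range.1 hk)
    _ = r ^ s * ∑ k ∈ range (s + 1), (s : ℝ) ^ k / k.factorial := (mul_sum ..).symm
    _ ≤ r ^ s * exp s := by gcongr; exact sum_le_exp_of_nonneg hs'.le _
    _ = (exp 1 * N * v / s) ^ s := by rw [← exp_one_pow]; ring

section SparseVectors

variable {ι M : Type*} [Fintype ι] [DecidableEq ι] [Zero M] [DecidableEq M]

def sparseVectors (V : Finset M) (s : ℕ) : Finset (ι → M) :=
  {f ∈ Fintype.piFinset fun _ => V | #{i | f i ≠ 0} ≤ s}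

theorem card_sparseVectors_le (V : Finset M) (s : ℕ) :
    #(sparseVectors (ι := ι) V s) ≤
      ∑ k ∈ range (s + 1), (Fintype.card ι).choose k * #V ^ k := by
  have hsub : sparseVectors (ι := ι) V s ⊆ (range (s + 1)).biUnion fun k =>
      (powersetCard k univ).biUnion fun S =>
        Fintype.piFinset fun i => if i ∈ S then V else {0} := by
    intro f hf
    simp only [sparseVectors, mem_filter, Fintype.mem_piFinset] at hf
    simp only [mem_biUnion, mem_range, mem_powersetCard_univ, Fintype.mem_piFinset]
    refine ⟨_, Nat.lt_succ_of_le hf.2, _, rfl, fun i => ?_⟩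
    by_cases h : f i = 0 <;> simp [h, hf.1 i]
  have hcard : ∀ S : Finset ι,
      #(Fintype.piFinset fun i => if i ∈ S then V else {0}) = #V ^ #S := by
    intro S
    rw [Fintype.card_piFinset, ← prod_const]
    simp [apply_ite card]
  calc #(sparseVectors V s)
      ≤ ∑ k ∈ range (s + 1), ∑ S ∈ powersetCard k univ,
          #(Fintype.piFinset fun i => if i ∈ S then V else {0}) :=
        (card_le_card hsub).trans (card_biUnion_le.trans (sum_le_sum fun k _ => card_biUnion_le))
    _ = _ := by
      refine sum_congr rfl fun k _ => ?_
      rw [sum_congr rfl fun S hS => by rw [hcard, (mem_powersetCard_univ.1 hS)], sum_const,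
        card_powersetCard, card_univ, smul_eq_mul]

theorem card_sparseVectors_le_pow {V : Finset M} (hV : V.Nonempty) {s : ℕ} (hs : 0 < s)
    (hsι : s ≤ Fintype.card ι) :
    (#(sparseVectors (ι := ι) V s) : ℝ) ≤ (exp 1 * Fintype.card ι * #V / s) ^ s :=
  calc (#(sparseVectors (ι := ι) V s) : ℝ)
      ≤ ∑ k ∈ range (s + 1), ((Fintype.card ι).choose k : ℝ) * (#V : ℝ) ^ k := by
        exact_mod_cast card_sparseVectors_le V s
    _ ≤ _ := sum_choose_mul_pow_le hs hsι (by exact_mod_cast hV.card_pos)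

end SparseVectors

section Layer

variable {ι α : Type*} [AddCommGroup α] [LinearOrder α]

def layer (e : ℕ → α) (j : ℕ) (w : ι → α) : ι → α :=
  fun i => if e (j + 1) < |w i| ∧ |w i| ≤ e j then w i else 0

theorem sum_range_layer_apply {e : ℕ → α} {J : ℕ} (he : ∀ j < J, e (j + 1) ≤ e j)
    {w : ι → α} {i : ι} (hw : |w i| ≤ e 0) :
    ∑ j ∈ range J, layer e j w i = if e J < |w i| then w i else 0 := by
  induction J with
  | zero => simp [not_lt.2 hw]
  | succ J ih =>
    rw [sum_range_succ, ih fun j hj => he j (by omega)]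
    have := he J J.lt_succ_self
    simp only [layer]
    split_ifs <;> grind

theorem sum_range_layer {e : ℕ → α} {J : ℕ} (he : ∀ j < J, e (j + 1) ≤ e j) {w : ι → α}
    (h0 : ∀ i, |w i| ≤ e 0) (hJ : ∀ i, w i ≠ 0 → e J < |w i|) :
    ∑ j ∈ range J, layer e j w = w := by
  funext i
  rw [Finset.sum_apply, sum_range_layer_apply he (h0 i)]
  by_cases h : w i = 0 <;> simp [h, hJ]

theorem layer_mem_sparseVectors [Fintype ι] [DecidableEq ι] [IsOrderedAddMonoid α]
    [LocallyFiniteOrder α] {e : ℕ → α} {j s : ℕ} {w : ι → α} (he : 0 ≤ e j)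
    (hs : #{i | e (j + 1) < |w i|} ≤ s) :
    layer e j w ∈ sparseVectors (Icc (-e j) (e j)) s := by
  refine mem_filter.2 ⟨Fintype.mem_piFinset.2 fun i => mem_Icc.2 ?_,
    (card_le_card fun i hi => ?_).trans hs⟩
  · simp only [layer]
    split_ifs with h
    · exact abs_le.1 h.2
    · exact ⟨neg_nonpos.2 he, he⟩
  · simp only [layer, mem_filter, mem_univ, true_and, ne_eq, ite_eq_right_iff,
      not_forall] at hi ⊢
    exact hi.1.1

end Layer

theorem sum_range_sub_mul_two_pow (a : ℝ) (J : ℕ) :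
    ∑ j ∈ range J, (a - j) * 2 ^ j = (a + 2 - J) * 2 ^ J - a - 2 := by
  induction J with
  | zero => simp
  | succ J ih => rw [sum_range_succ, ih]; push_cast; ring

theorem sum_range_inv_sq_sub_le_one_third {m : ℕ} (hm : 5 ≤ m) :
    ∑ j ∈ range (m - 5), (((m : ℝ) - j) ^ 2)⁻¹ ≤ 1 / 3 := by
  have h : ∑ j ∈ range (m - 5), (((m : ℝ) - j) ^ 2)⁻¹ =
      ∑ i ∈ Ioo 5 (m + 1), ((i : ℝ) ^ 2)⁻¹ := by
    refine sum_nbij' (fun j => m - j) (fun i => m - i) ?_ ?_ ?_ ?_ ?_ <;>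
      intro j hj <;> simp only [mem_range, mem_Ioo] at hj ⊢
    · omega
    · omega
    · omega
    · omega
    · rw [Nat.cast_sub (by omega)]
  rw [h]
  have := sum_Ioo_inv_sq_le (α := ℝ) 5 (m + 1)
  norm_num at this ⊢
  linarith

noncomputable def psi (m j : ℕ) : ℝ := (2 ^ (m - j - 4) : ℝ) / ((m : ℝ) - (j : ℝ)) ^ 2

theorem psi_nonneg (m j : ℕ) : 0 ≤ psi m j := by unfold psi; positivity

theorem psi_succ_le {m j : ℕ} (hj : j + 6 ≤ m) : psi m (j + 1) ≤ psi m j := by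
  obtain ⟨k, rfl⟩ := Nat.exists_eq_add_of_le hj
  have h1 : j + 6 + k - (j + 1) - 4 = k + 1 := by omega
  have h2 : j + 6 + k - j - 4 = k + 2 := by omega
  have e1 : ((j + 6 + k : ℕ) : ℝ) - ((j + 1 : ℕ) : ℝ) = k + 5 := by push_cast; ring
  have e2 : ((j + 6 + k : ℕ) : ℝ) - (j : ℝ) = k + 6 := by push_cast; ring
  rw [psi, psi, h1, h2, e1, e2, div_le_div_iff₀ (by positivity) (by positivity),
    pow_succ _ (k + 1), mul_assoc]
  gcongr
  nlinarith [k.cast_nonneg (α := ℝ)]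

theorem psi_sub_five {m : ℕ} (hm : 5 ≤ m) : psi m (m - 5) = 2 / 25 := by
  rw [psi, show m - (m - 5) - 4 = 1 by omega, Nat.cast_sub hm]
  norm_num

theorem sum_range_two_pow_mul_psi_le {m : ℕ} (hm : 5 ≤ m) :
    ∑ j ∈ range (m - 5), 2 ^ j * psi m j ≤ 2 ^ (m - 4) / 3 := by
  calc ∑ j ∈ range (m - 5), 2 ^ j * psi m j
      = 2 ^ (m - 4) * ∑ j ∈ range (m - 5), (((m : ℝ) - j) ^ 2)⁻¹ := by
        rw [mul_sum]
        refine sum_congr rfl fun j hj => ?_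
        rw [psi, mul_div_assoc', ← pow_add, div_eq_mul_inv,
          show j + (m - j - 4) = m - 4 by simp only [mem_range] at hj; omega]
    _ ≤ 2 ^ (m - 4) * (1 / 3) := by gcongr; exact sum_range_inv_sq_sub_le_one_third hm
    _ = 2 ^ (m - 4) / 3 := by ring

theorem sum_range_sub_add_psi_mul_two_pow_le {m : ℕ} (hm : 5 ≤ m) :
    ∑ j ∈ range (m - 5), ((m : ℝ) - j + 4 + psi m j) * 2 ^ j ≤ 2 ^ (m - 1) - 1 := by
  have hsplit : ∑ j ∈ range (m - 5), ((m : ℝ) - j + 4 + psi m j) * 2 ^ j =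
      ∑ j ∈ range (m - 5), ((m + 4 : ℝ) - j) * 2 ^ j +
        ∑ j ∈ range (m - 5), 2 ^ j * psi m j := by
    rw [← sum_add_distrib]
    exact sum_congr rfl fun j _ => by ring
  have h4 : (2 : ℝ) ^ (m - 4) = 2 * 2 ^ (m - 5) := by
    rw [← pow_succ']; congr 1; omega
  have h1 : (2 : ℝ) ^ (m - 1) = 16 * 2 ^ (m - 5) := by
    rw [show m - 1 = m - 5 + 4 by omega, pow_add]; ring
  rw [hsplit, sum_range_sub_mul_two_pow, Nat.cast_sub hm]
  have hpsi := sum_range_two_pow_mul_psi_le hm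
  have hpos : (1 : ℝ) ≤ 2 ^ (m - 5) := one_le_pow₀ one_le_two
  push_cast
  linarith

noncomputable def threshold (m j : ℕ) : ℤ := ⌊((2 : ℝ) ^ psi m j + 4) / 8⌋

theorem threshold_nonneg (m j : ℕ) : 0 ≤ threshold m j :=
  Int.floor_nonneg.2 (by positivity)

theorem threshold_succ_le {m j : ℕ} (hj : j + 6 ≤ m) : threshold m (j + 1) ≤ threshold m j :=
  Int.floor_mono (by gcongr; exacts [one_le_two, psi_succ_le hj])

theorem threshold_sub_five {m : ℕ} (hm : 5 ≤ m) : threshold m (m - 5) = 0 := by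
  have : (2 : ℝ) ^ psi m (m - 5) < 2 ^ (1 : ℝ) :=
    rpow_lt_rpow_of_exponent_lt one_lt_two (by rw [psi_sub_five hm]; norm_num)
  rw [threshold, Int.floor_eq_zero_iff, rpow_one] at *
  constructor <;> [positivity; linarith]

noncomputable def layerSet (m j : ℕ) : Finset (Fin (2 ^ m) → ℤ) :=
  sparseVectors (Icc (-threshold m j) (threshold m j)) (2 ^ j)

theorem card_layerSet_le {m j : ℕ} (hj : j ≤ m) :
    (#(layerSet m j) : ℝ) ≤ 2 ^ (((m : ℝ) - j + 4 + psi m j) * 2 ^ j) := by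
  set t := threshold m j
  set B : ℝ := 2 ^ psi m j
  have ht : 0 ≤ t := threshold_nonneg m j
  have hcard : (#(Icc (-t) t) : ℝ) = 2 * t + 1 := by
    have h : ((#(Icc (-t) t) : ℕ) : ℤ) = 2 * t + 1 := by
      rw [Int.card_Icc, Int.toNat_of_nonneg (by omega)]; ring
    exact_mod_cast h
  have hV : exp 1 * #(Icc (-t) t) ≤ 2 ^ 4 * B := by
    have hfl : (t : ℝ) ≤ (B + 4) / 8 := Int.floor_le _
    have ht' : (0 : ℝ) ≤ t := by exact_mod_cast ht
    have he : exp 1 ≤ 3 := by linarith [exp_one_lt_d9]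
    rw [hcard]
    nlinarith [mul_le_mul_of_nonneg_right he (by linarith : (0 : ℝ) ≤ 2 * t + 1),
      one_le_rpow one_le_two (psi_nonneg m j)]
  have h2m : (2 : ℝ) ^ m = 2 ^ (m - j) * 2 ^ j := by rw [← pow_add, Nat.sub_add_cancel hj]
  have hpow : (2 : ℝ) ^ ((m : ℝ) - j + 4 + psi m j) = 2 ^ (m - j) * (2 ^ 4 * B) := by
    rw [rpow_add two_pos, show (m : ℝ) - j + 4 = ((m - j + 4 : ℕ) : ℝ) by
      push_cast [Nat.cast_sub hj]; ring, rpow_natCast, pow_add, mul_assoc]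
  calc (#(layerSet m j) : ℝ)
      ≤ (exp 1 * 2 ^ m * #(Icc (-t) t) / 2 ^ j) ^ 2 ^ j := by
        simpa [layerSet] using card_sparseVectors_le_pow (ι := Fin (2 ^ m))
          ⟨0, mem_Icc.2 ⟨neg_nonpos.2 ht, ht⟩⟩ (Nat.two_pow_pos j)
          (by simpa using Nat.pow_le_pow_right two_pos hj)
    _ = (2 ^ (m - j) * (exp 1 * #(Icc (-t) t))) ^ 2 ^ j := by rw [h2m]; field_simp
    _ ≤ ((2 : ℝ) ^ ((m : ℝ) - j + 4 + psi m j)) ^ 2 ^ j := by rw [hpow]; gcongr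
    _ = 2 ^ (((m : ℝ) - j + 4 + psi m j) * 2 ^ j) := by
        rw [← rpow_natCast, ← rpow_mul zero_le_two]; push_cast; rfl

noncomputable def coveringSet (m : ℕ) : Finset (Fin (2 ^ m) → ℤ) :=
  (Fintype.piFinset fun j : Fin (m - 5) => layerSet m j).image fun L i => 8 * ∑ j, L j i

theorem card_coveringSet_le {m : ℕ} (hm : 5 ≤ m) :
    #(coveringSet m) ≤ 2 ^ (2 ^ (m - 1) - 1) := by
  have key : (#(coveringSet m) : ℝ) ≤ 2 ^ ((2 ^ (m - 1) - 1 : ℕ) : ℝ) :=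
    calc (#(coveringSet m) : ℝ) ≤ ∏ j : Fin (m - 5), (#(layerSet m j) : ℝ) := by
          exact_mod_cast card_image_le.trans (Fintype.card_piFinset _).le
      _ ≤ ∏ j : Fin (m - 5), (2 : ℝ) ^ (((m : ℝ) - j + 4 + psi m j) * 2 ^ (j : ℕ)) :=
          prod_le_prod (fun _ _ => by positivity) fun j _ => card_layerSet_le (by omega)
      _ = 2 ^ ∑ j ∈ range (m - 5), ((m : ℝ) - j + 4 + psi m j) * 2 ^ j := by
          rw [← rpow_sum_of_pos two_pos,
            Fin.sum_univ_eq_sum_range (fun j => ((m : ℝ) - j + 4 + psi m j) * 2 ^ j)]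
      _ ≤ 2 ^ ((2 ^ (m - 1) - 1 : ℕ) : ℝ) := by
          gcongr
          · exact one_le_two
          · push_cast [Nat.one_le_two_pow]
            exact sum_range_sub_add_psi_mul_two_pow_le hm
  rw [rpow_natCast] at key
  exact_mod_cast key

theorem exists_mem_coveringSet_abs_sub_le {m : ℕ} (hm : 5 ≤ m) (x : Fin (2 ^ m) → ℝ)
    (hx : ∀ j ≤ m - 5,
      #{i | (2 : ℝ) ^ psi m j < |x i|} ≤ if j = 0 then 0 else 2 ^ (j - 1)) :
    ∃ z ∈ coveringSet m, ∀ i, |x i - z i| ≤ 4 := by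
  set w : Fin (2 ^ m) → ℤ := fun i => round (x i / 8)
  have hcount : ∀ j ≤ m - 5,
      #{i | threshold m j < |w i|} ≤ if j = 0 then 0 else 2 ^ (j - 1) := fun j hj =>
    (card_le_card (monotone_filter_right _ fun _ _ => lt_abs_of_floor_lt_abs_round)).trans
      (hx j hj)
  have hw0 : ∀ i, |w i| ≤ threshold m 0 := by
    simpa [filter_eq_empty_iff] using hcount 0 (Nat.zero_le _)
  have hwJ : ∀ i, w i ≠ 0 → threshold m (m - 5) < |w i| := fun i hi => by
    rw [threshold_sub_five hm]; exact abs_pos.2 hi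
  refine ⟨fun i => 8 * w i, mem_image.2 ⟨fun j => layer (threshold m) j w, ?_, ?_⟩, fun i => ?_⟩
  · refine Fintype.mem_piFinset.2 fun j => layer_mem_sparseVectors (threshold_nonneg m j) ?_
    simpa using hcount (j + 1) (by omega)
  · funext i
    rw [Fin.sum_univ_eq_sum_range (fun j => layer (threshold m) j w i), ← Finset.sum_apply,
      sum_range_layer (fun j hj => threshold_succ_le (by omega)) hw0 hwJ]
  · push_cast
    linarith [abs_sub_mul_round_div_le (c := 8) (by norm_num) (x i)]

/-- Combinatorial covering lemma: for `m ≥ 5` and `n = 2^m` there is a set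
`Ω ⊆ ℤ^n` of cardinality at most `2^{n/2-1}` which is a `4`-net (in `ℓ_∞`) of the
set of sequences whose non-increasing rearrangement satisfies
`x*_{⌊2^{j-1}⌋+1} ≤ 2^{ψ(m,j)}` for `j = 0,…,m-5`, where `ψ(m,j) = 2^{m-j-4}(m-j)^{-2}`. -/
theorem stmt_6 (m : ℕ) (hm : 5 ≤ m) :
    ∃ Ω : Finset (Fin (2 ^ m) → ℤ),
      Ω.card ≤ 2 ^ (2 ^ (m - 1) - 1) ∧
      ∀ x : Fin (2 ^ m) → ℝ,
        (∀ j : ℕ, j ≤ m - 5 → ∀ k : Fin (2 ^ m),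
          (k : ℕ) = (if j = 0 then 0 else 2 ^ (j - 1)) →
          decRearrange x k ≤ (2 : ℝ) ^ ((2 ^ (m - j - 4) : ℝ) / ((m : ℝ) - (j : ℝ)) ^ 2)) →
        ∃ z ∈ Ω, ∀ i : Fin (2 ^ m), |x i - (z i : ℝ)| ≤ 4 := by
  refine ⟨coveringSet m, card_coveringSet_le hm, fun x hx =>
    exists_mem_coveringSet_abs_sub_le hm x fun j hj => ?_⟩
  have hk : (if j = 0 then 0 else 2 ^ (j - 1)) < 2 ^ m := by
    split_ifs
    exacts [Nat.two_pow_pos m, Nat.pow_lt_pow_right one_lt_two (by omega)]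
  exact card_lt_abs_le_of_decRearrange_le x (hx j hj ⟨_, hk⟩ rfl)
end

section
/- Let 0 < β ≤ 1 and A_β = β^{-1}·16·log₂(e). Define f(t) = t^{1/β} · 2^{-t/(16 (log₂ t)^2)} for t ≥ 32. Then f is non-decreasing on [32, A_β(log₂ A_β)^2] and non-increasing on [22·A_β(log₂ A_β)^2, ∞); consequently f(t) ≤ (22 A_β (log₂ A_β)^2)^{1/β} · 2^{-A_β(log₂ A_β)^2 / (16 (log₂(A_β (log₂ A_β)^2))^2)} for all t ≥ 32. -/
/-!
Write `t = eˣ`, `L = log 2`, `p = 1/β = A L / 16` and `c = L³/16`. Then `log f(eˣ) = p x - c eˣ/x²`,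
whose derivative `p - c ψ(x)`, with `ψ(x) = eˣ (x - 2)/x³`, is decreasing on `x > 0` because
`ψ'(x) = eˣ ((x - 2)² + 2)/x⁴ > 0`. So `f` increases as long as `c ψ(log t) ≤ p` and decreases once
`c ψ(log t) ≥ p`. For `T = A (log₂ A)²` one has `L² T = A (log A)²`, and the two sign conditions at
`t = T` and `t = 22 T` reduce to `(log A)² (x - 2) ≤ x³` and `x³ ≤ 22 (log A)² (x - 2)` for
`x = log T`, resp. `x = log (22 T)`; the latter holds because `6 ≤ log (22 T) ≤ 3.8 log A`.
On `[T, 22 T]` the two factors of `f` are bounded separately, `eˣ/x²` being increasing for `x ≥ 2`.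
-/
open Real Set

noncomputable def expDivSq (x : ℝ) : ℝ := exp x / x ^ 2

noncomputable def expDivSqDeriv (x : ℝ) : ℝ := exp x * (x - 2) / x ^ 3

noncomputable def logProfile (p c x : ℝ) : ℝ := p * x - c * expDivSq x

theorem hasDerivAt_expDivSq {x : ℝ} (hx : x ≠ 0) :
    HasDerivAt expDivSq (expDivSqDeriv x) x := by
  refine ((hasDerivAt_exp x).div (hasDerivAt_pow 2 x) (pow_ne_zero 2 hx)).congr_deriv ?_
  unfold expDivSqDeriv
  field_simp
  ring

theorem hasDerivAt_expDivSqDeriv {x : ℝ} (hx : x ≠ 0) :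
    HasDerivAt expDivSqDeriv (exp x * ((x - 2) ^ 2 + 2) / x ^ 4) x := by
  refine (((hasDerivAt_exp x).fun_mul ((hasDerivAt_id' x).sub_const 2)).fun_div (hasDerivAt_pow 3 x)
    (pow_ne_zero 3 hx)).congr_deriv ?_
  field_simp
  ring

theorem strictMonoOn_expDivSqDeriv : StrictMonoOn expDivSqDeriv (Ioi 0) := by
  refine strictMonoOn_of_deriv_pos (convex_Ioi 0) ?_ fun x hx => ?_
  · exact fun x hx => (hasDerivAt_expDivSqDeriv (ne_of_gt hx)).continuousAt.continuousWithinAt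
  · rw [interior_Ioi] at hx
    rw [(hasDerivAt_expDivSqDeriv (ne_of_gt hx)).deriv]
    have : (0:ℝ) < x := hx
    positivity

theorem expDivSqDeriv_nonneg {x : ℝ} (hx : 2 ≤ x) : 0 ≤ expDivSqDeriv x := by
  unfold expDivSqDeriv
  have : 0 ≤ x - 2 := by linarith
  positivity

theorem monotoneOn_expDivSq : MonotoneOn expDivSq (Ici 2) := by
  have hd : ∀ x ∈ Ici (2:ℝ), HasDerivAt expDivSq (expDivSqDeriv x) x :=
    fun x hx => hasDerivAt_expDivSq (by linarith [mem_Ici.1 hx])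
  refine monotoneOn_of_deriv_nonneg (convex_Ici 2)
    (fun x hx => (hd x hx).continuousAt.continuousWithinAt)
    (fun x hx => (hd x (interior_subset hx)).differentiableAt.differentiableWithinAt)
    fun x hx => ?_
  rw [(hd x (interior_subset hx)).deriv]
  exact expDivSqDeriv_nonneg (interior_subset hx)

theorem hasDerivAt_logProfile (p c : ℝ) {x : ℝ} (hx : x ≠ 0) :
    HasDerivAt (logProfile p c) (p - c * expDivSqDeriv x) x := by
  refine (((hasDerivAt_id' x).const_mul p).fun_sub
    ((hasDerivAt_expDivSq hx).const_mul c)).congr_deriv ?_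
  ring

theorem monotoneOn_logProfile {p c x₁ : ℝ} (hc : 0 ≤ c) (hx₁ : 0 < x₁)
    (h : c * expDivSqDeriv x₁ ≤ p) : MonotoneOn (logProfile p c) (Ioc 0 x₁) := by
  have hd : ∀ x ∈ Ioc 0 x₁, HasDerivAt (logProfile p c) (p - c * expDivSqDeriv x) x :=
    fun x hx => hasDerivAt_logProfile p c (ne_of_gt hx.1)
  refine monotoneOn_of_deriv_nonneg (convex_Ioc 0 x₁)
    (fun x hx => (hd x hx).continuousAt.continuousWithinAt)
    (fun x hx => (hd x (interior_subset hx)).differentiableAt.differentiableWithinAt)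
    fun x hx => ?_
  rw [interior_Ioc] at hx
  rw [(hd x (Ioo_subset_Ioc_self hx)).deriv, sub_nonneg]
  calc c * expDivSqDeriv x ≤ c * expDivSqDeriv x₁ := by
        gcongr
        exact strictMonoOn_expDivSqDeriv.monotoneOn hx.1 hx₁ hx.2.le
    _ ≤ p := h

theorem antitoneOn_logProfile {p c x₂ : ℝ} (hc : 0 ≤ c) (hx₂ : 0 < x₂)
    (h : p ≤ c * expDivSqDeriv x₂) : AntitoneOn (logProfile p c) (Ici x₂) := by
  have hd : ∀ x ∈ Ici x₂, HasDerivAt (logProfile p c) (p - c * expDivSqDeriv x) x :=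
    fun x hx => hasDerivAt_logProfile p c (by linarith [mem_Ici.1 hx])
  refine antitoneOn_of_deriv_nonpos (convex_Ici x₂)
    (fun x hx => (hd x hx).continuousAt.continuousWithinAt)
    (fun x hx => (hd x (interior_subset hx)).differentiableAt.differentiableWithinAt)
    fun x hx => ?_
  rw [interior_Ici] at hx
  rw [(hd x (Ioi_subset_Ici_self hx)).deriv, sub_nonpos]
  calc p ≤ c * expDivSqDeriv x₂ := h
    _ ≤ c * expDivSqDeriv x := by
        gcongr
        exact strictMonoOn_expDivSqDeriv.monotoneOn hx₂ (hx₂.trans hx) (le_of_lt hx)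

theorem logProfile_le {p c x₁ x₂ : ℝ} (hc : 0 ≤ c) (hx₁ : 2 ≤ x₁) (hx₁₂ : x₁ ≤ x₂)
    (h₁ : c * expDivSqDeriv x₁ ≤ p) (h₂ : p ≤ c * expDivSqDeriv x₂) {x : ℝ} (hx : 0 < x) :
    logProfile p c x ≤ p * x₂ - c * expDivSq x₁ := by
  have hp : 0 ≤ p := (mul_nonneg hc (expDivSqDeriv_nonneg hx₁)).trans h₁
  have middle : ∀ y ∈ Icc x₁ x₂, logProfile p c y ≤ p * x₂ - c * expDivSq x₁ := by
    intro y ⟨hy₁, hy₂⟩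
    unfold logProfile
    gcongr
    exact monotoneOn_expDivSq hx₁ (hx₁.trans hy₁) hy₁
  rcases le_total x x₁ with hxx₁ | hx₁x
  · calc logProfile p c x ≤ logProfile p c x₁ :=
          monotoneOn_logProfile hc (by linarith) h₁ ⟨hx, hxx₁⟩ ⟨by linarith, le_rfl⟩ hxx₁
      _ ≤ _ := middle x₁ ⟨le_rfl, hx₁₂⟩
  rcases le_total x x₂ with hxx₂ | hx₂x
  · exact middle x ⟨hx₁x, hxx₂⟩
  · calc logProfile p c x ≤ logProfile p c x₂ :=
          antitoneOn_logProfile hc (by linarith) h₂ self_mem_Ici hx₂x hx₂x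
      _ ≤ _ := middle x₂ ⟨hx₁₂, le_rfl⟩

theorem two_rpow_neg_div_logb_sq {t : ℝ} (ht : 0 < t) :
    (2 : ℝ) ^ (-(t / (16 * logb 2 t ^ 2))) = exp (-(log 2 ^ 3 / 16 * expDivSq (log t))) := by
  rw [rpow_def_of_pos two_pos, expDivSq, exp_log ht, logb, div_pow, mul_div_assoc',
    div_div_eq_mul_div]
  ring_nf

theorem rpow_mul_two_rpow_eq_exp_logProfile (p : ℝ) {t : ℝ} (ht : 0 < t) :
    t ^ p * (2 : ℝ) ^ (-(t / (16 * logb 2 t ^ 2))) =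
      exp (logProfile p (log 2 ^ 3 / 16) (log t)) := by
  rw [rpow_def_of_pos ht, two_rpow_neg_div_logb_sq ht, ← exp_add, logProfile]
  ring_nf

theorem expDivSqDeriv_log {u : ℝ} (hu : 0 < u) :
    expDivSqDeriv (log u) = u * (log u - 2) / log u ^ 3 := by
  rw [expDivSqDeriv, exp_log hu]

theorem exp_three_lt : exp 3 < 21 := by
  have h := exp_one_lt_d9
  have h3 : exp 3 = exp 1 ^ 3 := by rw [← exp_nat_mul]; norm_num
  rw [h3]
  nlinarith [pow_lt_pow_left₀ h (exp_pos 1).le three_ne_zero]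

theorem twentyThree_le_of_le {A : ℝ} (hA : 16 / log 2 ≤ A) : 23 ≤ A := by
  have hL := log_two_lt_d9
  have h23 : 23 ≤ 16 / log 2 := by rw [le_div_iff₀ (log_pos one_lt_two)]; linarith
  linarith

theorem three_le_log_of_le {A : ℝ} (hA : 16 / log 2 ≤ A) : 3 ≤ log A := by
  have h23 := twentyThree_le_of_le hA
  rw [le_log_iff_exp_le (by linarith)]
  linarith [exp_three_lt]

theorem one_le_logb_two_of_le {A : ℝ} (hA : 16 / log 2 ≤ A) : 1 ≤ logb 2 A := by
  have ha := three_le_log_of_le hA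
  have hL := log_two_lt_d9
  rw [logb, le_div_iff₀ (log_pos one_lt_two)]
  linarith

theorem le_mul_logb_two_sq {A : ℝ} (hA : 16 / log 2 ≤ A) : A ≤ A * logb 2 A ^ 2 :=
  le_mul_of_one_le_right (by linarith [twentyThree_le_of_le hA])
    (one_le_pow₀ (one_le_logb_two_of_le hA))

theorem log_two_sq_mul_mul_logb_sq (A : ℝ) :
    log 2 ^ 2 * (A * logb 2 A ^ 2) = A * log A ^ 2 := by
  have : log 2 ≠ 0 := (log_pos one_lt_two).ne'
  rw [logb]
  field_simp

theorem mul_expDivSqDeriv_log_le_of_le {A : ℝ} (hA : 16 / log 2 ≤ A) :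
    log 2 ^ 3 / 16 * expDivSqDeriv (log (A * logb 2 A ^ 2)) ≤ A * log 2 / 16 := by
  set T := A * logb 2 A ^ 2
  have hA0 : 0 < A := by linarith [twentyThree_le_of_le hA]
  have hAT : A ≤ T := le_mul_logb_two_sq hA
  have ha := three_le_log_of_le hA
  have hax : log A ≤ log T := log_le_log hA0 hAT
  have hsq : log A ^ 2 ≤ log T ^ 2 := pow_le_pow_left₀ (by linarith) hax 2
  have key : log A ^ 2 * (log T - 2) ≤ log T ^ 3 := by
    nlinarith [mul_le_mul_of_nonneg_right hsq (show 0 ≤ log T by linarith)]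
  have hL := log_pos one_lt_two
  rw [expDivSqDeriv_log (hA0.trans_le hAT), mul_div_assoc', div_le_iff₀ (pow_pos (by linarith) 3)]
  calc log 2 ^ 3 / 16 * (T * (log T - 2)) = A * log 2 / 16 * (log A ^ 2 * (log T - 2)) := by
        linear_combination (log 2 / 16 * (log T - 2)) * log_two_sq_mul_mul_logb_sq A
    _ ≤ A * log 2 / 16 * log T ^ 3 := by gcongr

theorem cube_le_of_le_mul {a x : ℝ} (hx : 6 ≤ x) (hxa : x ≤ 3.8 * a) :
    x ^ 3 ≤ 22 * a ^ 2 * (x - 2) := by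
  have hsq : x ^ 2 ≤ 14.44 * a ^ 2 := by nlinarith
  nlinarith [mul_le_mul_of_nonneg_left hsq (show 0 ≤ x by linarith)]

theorem log_mul_logb_sq_bounds {A : ℝ} (hA : 16 / log 2 ≤ A) :
    6 ≤ log (22 * (A * logb 2 A ^ 2)) ∧ log (22 * (A * logb 2 A ^ 2)) ≤ 3.8 * log A := by
  have hL₁ := log_two_gt_d9
  have hL₂ := log_two_lt_d9
  have ha := three_le_log_of_le hA
  have hb := one_le_logb_two_of_le hA
  have hA0 : 0 < A := by linarith [twentyThree_le_of_le hA]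
  have hx : log (22 * (A * logb 2 A ^ 2)) = log 22 + log A + 2 * log (logb 2 A) := by
    rw [log_mul (by norm_num) (by positivity), log_mul hA0.ne' (by positivity), log_pow]
    push_cast
    ring
  have h22 : 3 ≤ log 22 := by
    rw [le_log_iff_exp_le (by norm_num)]
    linarith [exp_three_lt]
  have h22' : log 22 ≤ 5 * log 2 := by
    rw [← log_rpow two_pos]
    exact log_le_log (by norm_num) (by norm_num)
  have hloglog : log (logb 2 A) ≤ log A - 1 + (log 2)⁻¹ - 1 := by
    rw [logb, log_div (by linarith) (log_pos one_lt_two).ne', sub_eq_add_neg, ← log_inv]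
    linarith [log_le_sub_one_of_pos (show 0 < log A by linarith),
      log_le_sub_one_of_pos (inv_pos.2 (log_pos one_lt_two))]
  have hinv : (log 2)⁻¹ ≤ 1.443 := by
    rw [inv_le_comm₀ (log_pos one_lt_two) (by norm_num)]
    linarith
  constructor
  · rw [hx]
    linarith [log_nonneg hb]
  · rw [hx]
    linarith

theorem le_mul_expDivSqDeriv_log_of_le {A : ℝ} (hA : 16 / log 2 ≤ A) :
    A * log 2 / 16 ≤ log 2 ^ 3 / 16 * expDivSqDeriv (log (22 * (A * logb 2 A ^ 2))) := by
  set T := A * logb 2 A ^ 2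
  have hA0 : 0 < A := by linarith [twentyThree_le_of_le hA]
  have hT0 : 0 < T := mul_pos hA0 (pow_pos (zero_lt_one.trans_le (one_le_logb_two_of_le hA)) 2)
  obtain ⟨hx₁, hx₂⟩ := log_mul_logb_sq_bounds hA
  have key := cube_le_of_le_mul hx₁ hx₂
  have hL := log_pos one_lt_two
  rw [expDivSqDeriv_log (by positivity), mul_div_assoc', le_div_iff₀ (pow_pos (by linarith) 3)]
  calc A * log 2 / 16 * log (22 * T) ^ 3
      ≤ A * log 2 / 16 * (22 * log A ^ 2 * (log (22 * T) - 2)) := by gcongr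
    _ = log 2 ^ 3 / 16 * (22 * T * (log (22 * T) - 2)) := by
        linear_combination (-(22 * log 2 / 16) * (log (22 * T) - 2)) * log_two_sq_mul_mul_logb_sq A

/-- Behaviour of `f(t) = t^{1/β} 2^{-t/(16 (log₂ t)²)}` on `[32,∞)`:
monotone up to `A_β(log₂ A_β)²`, antitone beyond `22·A_β(log₂ A_β)²`, and the
resulting uniform bound, where `A_β = β⁻¹·16·log₂ e`. -/
theorem stmt_7 (β : ℝ) (hβ0 : 0 < β) (hβ1 : β ≤ 1)
    (A : ℝ) (hA : A = β⁻¹ * 16 * Real.logb 2 (Real.exp 1))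
    (f : ℝ → ℝ)
    (hf : ∀ t ≥ (32:ℝ), f t = t ^ (1 / β) * (2 : ℝ) ^ (-(t / (16 * (Real.logb 2 t) ^ 2)))) :
    MonotoneOn f (Set.Icc 32 (A * (Real.logb 2 A) ^ 2)) ∧
    AntitoneOn f (Set.Ici (22 * A * (Real.logb 2 A) ^ 2)) ∧
    ∀ t ≥ (32:ℝ), f t ≤ (22 * A * (Real.logb 2 A) ^ 2) ^ (1 / β) *
      (2 : ℝ) ^ (-(A * (Real.logb 2 A) ^ 2 / (16 * (Real.logb 2 (A * (Real.logb 2 A) ^ 2)) ^ 2))) := by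
  have hA' : A = 16 / log 2 / β := by rw [hA, logb, log_exp]; field_simp
  have hA16 : 16 / log 2 ≤ A := hA' ▸ le_div_self (by positivity) hβ0 hβ1
  have hp : 1 / β = A * log 2 / 16 := by rw [hA']; field_simp
  have hA23 := twentyThree_le_of_le hA16
  have hc : 0 ≤ log 2 ^ 3 / 16 := by positivity
  rw [mul_assoc 22, hp]
  set T := A * logb 2 A ^ 2
  have hT : A ≤ T := le_mul_logb_two_sq hA16
  have hlogT : 3 ≤ log T := (three_le_log_of_le hA16).trans (log_le_log (by linarith) hT)
  have hf' : ∀ t ≥ (32:ℝ), f t = exp (logProfile (A * log 2 / 16) (log 2 ^ 3 / 16) (log t)) :=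
    fun t ht => by rw [hf t ht, hp, rpow_mul_two_rpow_eq_exp_logProfile _ (by linarith)]
  refine ⟨fun u hu v hv huv => ?_, fun u hu v hv huv => ?_, fun t ht => ?_⟩
  · have hu0 : 0 < u := by linarith [hu.1]
    rw [hf' u hu.1, hf' v hv.1, exp_le_exp]
    exact monotoneOn_logProfile hc (by linarith) (mul_expDivSqDeriv_log_le_of_le hA16)
      ⟨log_pos (by linarith [hu.1]), log_le_log hu0 hu.2⟩
      ⟨log_pos (by linarith [hv.1]), log_le_log (by linarith) hv.2⟩ (log_le_log hu0 huv)
  · have hu' : 22 * T ≤ u := hu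
    have hv' : 22 * T ≤ v := hv
    rw [hf' u (by linarith), hf' v (by linarith), exp_le_exp]
    exact antitoneOn_logProfile hc (log_pos (by linarith)) (le_mul_expDivSqDeriv_log_of_le hA16)
      (log_le_log (by linarith) hu') (log_le_log (by linarith) hv') (log_le_log (by linarith) huv)
  · rw [hf' t ht, rpow_def_of_pos (by linarith), two_rpow_neg_div_logb_sq (by linarith), ← exp_add,
      exp_le_exp, mul_comm (log (22 * T)), ← sub_eq_add_neg]
    exact logProfile_le hc (by linarith) (log_le_log (by linarith) (by linarith))
      (mul_expDivSqDeriv_log_le_of_le hA16) (le_mul_expDivSqDeriv_log_of_le hA16)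
      (log_pos (show 1 < t by linarith))
end

section
/- Let m ∈ ℕ and let {E_i}_{i=0}^m be pairwise disjoint non-empty finite sets with #E_i ≤ 2^{m+2^i}. Let ℱ be the family of all sequences (F_i)_{i=0}^m with F_i ⊆ E_i and ∑_{i=0}^m (#F_i)/2^{m-i} ≤ 1. Then log₂(#ℱ) ≤ 2^{m+3}. -/
/-!
Group the tuples `(F_i)` by their profile `s_i = #F_i`. The constraint reads
`∑ s_i 2^i ≤ 2^m`, so every `s_i ≤ 2^m` and there are at most `(2^m + 1)^(m+1) ≤ 2^(4·2^m)`
profiles. A fixed profile is realised by `∏ C(#E_i, s_i)` tuples, and `C(N, s) ≤ (eN/s)^s`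
with `#E_i ≤ 2^m · 2^(2^i)` gives `log C(#E_i, s_i) ≤ s_i 2^i (log 2 + 1) + 2^m / (e 2^i)`.
Summing over `i` with the constraint and a geometric series bounds the product by
`exp ((log 2 + 1 + 2/e) 2^m) ≤ 2^(4·2^m)`.
-/

open Real Finset

lemma card_le_sum_prod_choose {ι α : Type*} [Fintype ι] [DecidableEq ι] [DecidableEq α]
    (E : ι → Finset α) (P : (ι → Finset α) → Prop) (T : Finset (ι → ℕ))
    (hT : ∀ F, (∀ i, F i ⊆ E i) → P F → (fun i ↦ #(F i)) ∈ T) :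
    Nat.card {F : ι → Finset α // (∀ i, F i ⊆ E i) ∧ P F} ≤
      ∑ s ∈ T, ∏ i, (#(E i)).choose (s i) := by
  set S := T.biUnion fun s ↦ Fintype.piFinset fun i ↦ (E i).powersetCard (s i)
  have hsub : {F | (∀ i, F i ⊆ E i) ∧ P F} ⊆ (S : Set (ι → Finset α)) := by
    rintro F ⟨hFE, hP⟩
    simp only [S, coe_biUnion, Set.mem_iUnion, mem_coe, Fintype.mem_piFinset,
      mem_powersetCard]
    exact ⟨_, hT F hFE hP, fun i ↦ ⟨hFE i, rfl⟩⟩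
  calc Nat.card {F : ι → Finset α // (∀ i, F i ⊆ E i) ∧ P F}
      = Set.ncard {F | (∀ i, F i ⊆ E i) ∧ P F} := Nat.card_coe_set_eq _
    _ ≤ #S := by simpa using Set.ncard_le_ncard hsub
    _ ≤ ∑ s ∈ T, #(Fintype.piFinset fun i ↦ (E i).powersetCard (s i)) := card_biUnion_le
    _ = ∑ s ∈ T, ∏ i, (#(E i)).choose (s i) := by
        simp only [Fintype.card_piFinset, card_powersetCard]

lemma sum_mul_two_pow_le_of_sum_div_le_one {m : ℕ} {c : Fin (m + 1) → ℕ}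
    (h : ∑ i : Fin (m + 1), (c i : ℝ) / 2 ^ (m - (i : ℕ)) ≤ 1) :
    ∑ i : Fin (m + 1), c i * 2 ^ (i : ℕ) ≤ 2 ^ m := by
  have hterm (i : Fin (m + 1)) :
      (c i : ℝ) / 2 ^ (m - (i : ℕ)) = c i * 2 ^ (i : ℕ) / 2 ^ m := by
    have hm : (2 : ℝ) ^ m = 2 ^ (i : ℕ) * 2 ^ (m - (i : ℕ)) := by
      rw [← pow_add, Nat.add_sub_of_le (Nat.lt_succ_iff.mp i.isLt)]
    rw [hm]
    field_simp
  rw [sum_congr rfl fun i _ ↦ hterm i, ← sum_div, div_le_one (by positivity)] at h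
  exact_mod_cast h

def admissibleProfiles (m : ℕ) : Finset (Fin (m + 1) → ℕ) :=
  {s ∈ Fintype.piFinset fun _ ↦ range (2 ^ m + 1) | ∑ i, s i * 2 ^ (i : ℕ) ≤ 2 ^ m}

lemma mem_admissibleProfiles {m : ℕ} {s : Fin (m + 1) → ℕ} :
    s ∈ admissibleProfiles m ↔ ∑ i, s i * 2 ^ (i : ℕ) ≤ 2 ^ m := by
  refine ⟨fun hs ↦ (mem_filter.1 hs).2, fun hs ↦ mem_filter.2 ⟨?_, hs⟩⟩
  refine Fintype.mem_piFinset.2 fun i ↦ mem_range_succ_iff.2 ?_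
  calc s i ≤ s i * 2 ^ (i : ℕ) := Nat.le_mul_of_pos_right _ (Nat.two_pow_pos _)
    _ ≤ ∑ j, s j * 2 ^ (j : ℕ) :=
        single_le_sum (f := fun j ↦ s j * 2 ^ (j : ℕ)) (fun _ _ ↦ Nat.zero_le _) (mem_univ i)
    _ ≤ 2 ^ m := hs

lemma succ_sq_le_two_pow_add_two (m : ℕ) : (m + 1) ^ 2 ≤ 2 ^ (m + 2) := by
  induction m with
  | zero => norm_num
  | succ n ih =>
    rcases Nat.lt_or_ge n 2 with h | h
    · interval_cases n <;> norm_num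
    · calc (n + 1 + 1) ^ 2 ≤ 2 * (n + 1) ^ 2 := by nlinarith
        _ ≤ 2 * 2 ^ (n + 2) := by gcongr
        _ = 2 ^ (n + 1 + 2) := by ring

lemma card_admissibleProfiles_le (m : ℕ) : #(admissibleProfiles m) ≤ 2 ^ (4 * 2 ^ m) :=
  calc #(admissibleProfiles m)
      ≤ #(Fintype.piFinset fun _ : Fin (m + 1) ↦ range (2 ^ m + 1)) := card_filter_le _ _
    _ = (2 ^ m + 1) ^ (m + 1) := by rw [Fintype.card_piFinset_const, card_range]
    _ ≤ (2 ^ (m + 1)) ^ (m + 1) := by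
        gcongr; rw [pow_succ]; linarith [Nat.one_le_two_pow (n := m)]
    _ = 2 ^ ((m + 1) ^ 2) := by rw [← pow_mul, sq]
    _ ≤ 2 ^ (4 * 2 ^ m) := by
        gcongr
        · norm_num
        · calc (m + 1) ^ 2 ≤ 2 ^ (m + 2) := succ_sq_le_two_pow_add_two m
            _ = 4 * 2 ^ m := by ring

lemma choose_le_exp_one_mul_div_pow (N s : ℕ) :
    (N.choose s : ℝ) ≤ (exp 1 * N / s) ^ s := by
  rcases Nat.eq_zero_or_pos s with rfl | hs
  · simp
  have hs' : (0 : ℝ) < s := by exact_mod_cast hs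
  have hpow : (s : ℝ) ^ s / s.factorial ≤ exp s := pow_div_factorial_le_exp _ hs'.le s
  calc (N.choose s : ℝ) ≤ (N : ℝ) ^ s / s.factorial := Nat.choose_le_pow_div s N
    _ = (N : ℝ) ^ s / (s : ℝ) ^ s * ((s : ℝ) ^ s / s.factorial) := by field_simp
    _ ≤ (N : ℝ) ^ s / (s : ℝ) ^ s * exp s := by gcongr
    _ = (exp 1 * N / s) ^ s := by
        rw [← exp_one_pow, mul_div_assoc, mul_pow, div_pow]; ring

lemma choose_le_exp_of_le_mul_two_pow {N s k : ℕ} {A : ℝ} (hA : 0 < A) (hk : 0 < k)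
    (hN : (N : ℝ) ≤ A * 2 ^ k) :
    (N.choose s : ℝ) ≤ exp (s * k * (log 2 + 1) + A / (exp 1 * k)) := by
  rcases Nat.eq_zero_or_pos s with rfl | hs
  · simp only [Nat.choose_zero_right, Nat.cast_one, CharP.cast_eq_zero, zero_mul, zero_add]
    exact one_le_exp (by positivity)
  set z := A / (s * k)
  -- `e k ≤ exp k` and `z ≤ exp (z / e)` are both instances of `e x ≤ exp x`
  have hbase : exp 1 * A * 2 ^ k / s ≤ exp (k * (log 2 + 1) + z / exp 1) :=
    calc exp 1 * A * 2 ^ k / s = 2 ^ k * (exp 1 * k) * (exp 1 * (z / exp 1)) := by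
          simp only [z]; field_simp
      _ ≤ exp (k * log 2) * exp k * exp (z / exp 1) := by
          rw [← rpow_natCast, rpow_def_of_pos two_pos, mul_comm (log 2)]
          gcongr <;> exact exp_one_mul_le_exp
      _ = exp (k * (log 2 + 1) + z / exp 1) := by rw [← exp_add, ← exp_add]; ring_nf
  calc (N.choose s : ℝ) ≤ (exp 1 * N / s) ^ s := choose_le_exp_one_mul_div_pow N s
    _ ≤ (exp 1 * A * 2 ^ k / s) ^ s := by rw [mul_assoc]; gcongr
    _ ≤ exp (k * (log 2 + 1) + z / exp 1) ^ s := by gcongr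
    _ = exp (s * k * (log 2 + 1) + A / (exp 1 * k)) := by
        rw [← exp_nat_mul]; congr 1; simp only [z]; field_simp

lemma one_add_two_div_exp_one_le : 1 + 2 / exp 1 ≤ 3 * log 2 := by
  have he : (2.7 : ℝ) < exp 1 := lt_trans (by norm_num) exp_one_gt_d9
  have hl : (0.6931471803 : ℝ) < log 2 := log_two_gt_d9
  have : 2 / exp 1 < 0.75 := by rw [div_lt_iff₀ (exp_pos 1)]; linarith
  linarith

lemma prod_choose_le_of_mem_admissibleProfiles {m : ℕ} {N : Fin (m + 1) → ℕ}
    (hN : ∀ i : Fin (m + 1), N i ≤ 2 ^ (m + 2 ^ (i : ℕ)))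
    {s : Fin (m + 1) → ℕ} (hs : s ∈ admissibleProfiles m) :
    ∏ i, (N i).choose (s i) ≤ 2 ^ (4 * 2 ^ m) := by
  have hterm (i : Fin (m + 1)) : ((N i).choose (s i) : ℝ) ≤
      exp (s i * 2 ^ (i : ℕ) * (log 2 + 1) + 2 ^ m / (exp 1 * 2 ^ (i : ℕ))) := by
    have hNi : (N i : ℝ) ≤ 2 ^ m * 2 ^ 2 ^ (i : ℕ) := by
      rw [← pow_add]; exact_mod_cast hN i
    simpa using choose_le_exp_of_le_mul_two_pow (s := s i) (by positivity)
      (Nat.two_pow_pos (i : ℕ)) (by exact_mod_cast hNi)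
  have hsum : ∑ i, (s i : ℝ) * 2 ^ (i : ℕ) ≤ 2 ^ m := by
    exact_mod_cast mem_admissibleProfiles.1 hs
  have hgeom : ∑ i : Fin (m + 1), (2 : ℝ) ^ m / (exp 1 * 2 ^ (i : ℕ)) ≤ 2 ^ m * (2 / exp 1) :=
    calc ∑ i : Fin (m + 1), (2 : ℝ) ^ m / (exp 1 * 2 ^ (i : ℕ))
        = 2 ^ m / exp 1 * ∑ i : Fin (m + 1), (1 / 2 : ℝ) ^ (i : ℕ) := by
          rw [mul_sum]; congr! 1 with i; field_simp; rw [← mul_pow]; norm_num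
      _ ≤ 2 ^ m / exp 1 * 2 := by
          gcongr
          rw [Fin.sum_univ_eq_sum_range (fun i ↦ (1 / 2 : ℝ) ^ i)]
          exact sum_geometric_two_le (m + 1)
      _ = 2 ^ m * (2 / exp 1) := by ring
  have hexponent : ∑ i : Fin (m + 1), ((s i : ℝ) * 2 ^ (i : ℕ) * (log 2 + 1) +
      2 ^ m / (exp 1 * 2 ^ (i : ℕ))) ≤ 4 * 2 ^ m * log 2 := by
    rw [sum_add_distrib, ← sum_mul]
    nlinarith [one_add_two_div_exp_one_le, pow_pos (two_pos (α := ℝ)) m, log_pos one_lt_two]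
  have hreal : ∏ i, ((N i).choose (s i) : ℝ) ≤ 2 ^ (4 * 2 ^ m) :=
    calc ∏ i, ((N i).choose (s i) : ℝ)
        ≤ ∏ i, exp (s i * 2 ^ (i : ℕ) * (log 2 + 1) + 2 ^ m / (exp 1 * 2 ^ (i : ℕ))) :=
          prod_le_prod (fun _ _ ↦ by positivity) fun i _ ↦ hterm i
      _ = exp (∑ i, ((s i : ℝ) * 2 ^ (i : ℕ) * (log 2 + 1) +
            2 ^ m / (exp 1 * 2 ^ (i : ℕ)))) := (exp_sum _ _).symm
      _ ≤ exp (4 * 2 ^ m * log 2) := exp_le_exp.2 hexponent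
      _ = exp (log 2) ^ (4 * 2 ^ m) := by rw [← exp_nat_mul]; push_cast; ring_nf
      _ = 2 ^ (4 * 2 ^ m) := by rw [exp_log two_pos]
  exact_mod_cast hreal

theorem stmt_11_general (m : ℕ) (E : Fin (m + 1) → Finset ℕ)
    (hcard : ∀ i : Fin (m + 1), (E i).card ≤ 2 ^ (m + 2 ^ (i : ℕ))) :
    Real.logb 2
      (Nat.card {F : Fin (m + 1) → Finset ℕ //
        (∀ i, F i ⊆ E i) ∧ ∑ i : Fin (m + 1), ((F i).card : ℝ) / 2 ^ (m - (i : ℕ)) ≤ 1})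
      ≤ 2 ^ (m + 3) := by
  set ℱ := {F : Fin (m + 1) → Finset ℕ //
    (∀ i, F i ⊆ E i) ∧ ∑ i : Fin (m + 1), ((F i).card : ℝ) / 2 ^ (m - (i : ℕ)) ≤ 1}
  have hℱ : Nat.card ℱ ≤ 2 ^ 2 ^ (m + 3) :=
    calc Nat.card ℱ ≤ ∑ s ∈ admissibleProfiles m, ∏ i, (#(E i)).choose (s i) :=
          card_le_sum_prod_choose E _ _ fun _ _ hF ↦
            mem_admissibleProfiles.2 (sum_mul_two_pow_le_of_sum_div_le_one hF)
      _ ≤ #(admissibleProfiles m) * 2 ^ (4 * 2 ^ m) :=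
          sum_le_card_nsmul _ _ _ fun _ hs ↦ prod_choose_le_of_mem_admissibleProfiles hcard hs
      _ ≤ 2 ^ (4 * 2 ^ m) * 2 ^ (4 * 2 ^ m) := by
          gcongr; exact card_admissibleProfiles_le m
      _ = 2 ^ 2 ^ (m + 3) := by ring
  rcases (Nat.card ℱ).eq_zero_or_pos with h0 | hpos
  · rw [h0, Nat.cast_zero, logb_zero]; positivity
  · rw [logb_le_iff_le_rpow one_lt_two (by exact_mod_cast hpos)]
    exact_mod_cast hℱ

/-- Edmunds–Netrusov counting lemma: if `E_0,…,E_m` are pairwise disjoint non-empty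
finite sets with `#E_i ≤ 2^{m+2^i}`, and `ℱ` is the family of tuples `(F_i)` of subsets
`F_i ⊆ E_i` with `∑ (#F_i)/2^{m-i} ≤ 1`, then `log₂(#ℱ) ≤ 2^{m+3}`. -/
theorem stmt_11 (m : ℕ) (E : Fin (m + 1) → Finset ℕ)
    (hdisj : ∀ i j, i ≠ j → Disjoint (E i) (E j))
    (hne : ∀ i, (E i).Nonempty)
    (hcard : ∀ i : Fin (m + 1), (E i).card ≤ 2 ^ (m + 2 ^ (i : ℕ))) :
    Real.logb 2
      (Nat.card {F : Fin (m + 1) → Finset ℕ //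
        (∀ i, F i ⊆ E i) ∧ ∑ i : Fin (m + 1), ((F i).card : ℝ) / 2 ^ (m - (i : ℕ)) ≤ 1})
      ≤ 2 ^ (m + 3) :=
  stmt_11_general m E hcard
end

section
/- Let n ∈ ℕ, 0 < p < ∞, and let ℓ_{p,∞}ⁿ carry the quasi-norm ‖x‖ = sup_{1≤i≤n} i^{1/p} x_i*, where (x_i*) is the non-increasing rearrangement. If α ≥ 0, β is defined by 1/β = α + 1/p, and D_α(x)_i = (2^m/i)^α x_i on sequences of length 2^m, then for every z in the unit ball of ℓ_{p,∞}^{2^m}, the sequence (i^{-α} z_i)_{i=1}^{2^m} has ℓ_{β,∞}-quasi-norm at most 2^{1/β}. -/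
open Real Finset

section decRearrange

variable {n : ℕ}

lemma decRearrange_nonneg (x : Fin n → ℝ) (k : Fin n) : 0 ≤ decRearrange x k :=
  abs_nonneg _

lemma decRearrange_antitone (x : Fin n → ℝ) : Antitone (decRearrange x) :=
  fun _ _ hab => Tuple.monotone_sort (fun j => |x j|) (Fin.rev_le_rev.mpr hab)

lemma card_lt_decRearrange_le (x : Fin n → ℝ) (k : Fin n) :
    #{j | decRearrange x k < |x j|} ≤ k := by
  set σ := Tuple.sort (fun j => |x j|)
  have hsub : ({j | decRearrange x k < |x j|} : Finset (Fin n)) ⊆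
      (Ioi k.rev).map σ.toEmbedding := by
    intro j hj
    rw [mem_filter] at hj
    refine mem_map_equiv.mpr (mem_Ioi.mpr (lt_of_not_ge fun hle => hj.2.not_ge ?_))
    simpa [σ, decRearrange] using Tuple.monotone_sort (fun j => |x j|) hle
  calc #{j | decRearrange x k < |x j|} ≤ #(Ioi k.rev) := by simpa using card_le_card hsub
    _ = k := by rw [Fin.card_Ioi, Fin.val_rev]; omega

lemma decRearrange_le_of_card_le (x : Fin n → ℝ) (i : Fin n) (t : ℝ)
    (h : #{j | t < |x j|} ≤ i) : decRearrange x i ≤ t := by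
  by_contra! hlt
  set σ := Tuple.sort (fun j => |x j|)
  have hinj : Function.Injective fun k : Fin n => σ k.rev :=
    fun a b hab => by simpa using σ.injective hab
  have hsub : (Iic i).image (fun k => σ k.rev) ⊆ ({j | t < |x j|} : Finset (Fin n)) := by
    intro j hj
    obtain ⟨k, hk, rfl⟩ := mem_image.mp hj
    exact mem_filter.mpr ⟨mem_univ _, hlt.trans_le (decRearrange_antitone x (mem_Iic.mp hk))⟩
  have := card_le_card hsub
  rw [card_image_of_injective _ hinj, Fin.card_Iic] at this
  omega

lemma decRearrange_le_abs_of_antitone (x : Fin n → ℝ) (hx : Antitone fun j => |x j|)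
    (k : Fin n) : decRearrange x k ≤ |x k| := by
  refine decRearrange_le_of_card_le x k _ ((card_le_card fun j hj => ?_).trans (Fin.card_Iio k).le)
  rw [mem_filter] at hj
  exact mem_Iio.mpr (lt_of_not_ge fun hkj => hj.2.not_ge (hx hkj))

lemma decRearrange_mul_le (u v : Fin n → ℝ) {i k l : Fin n} (hkl : (k : ℕ) + l ≤ i) :
    decRearrange (fun j => u j * v j) i ≤ decRearrange u k * decRearrange v l := by
  apply decRearrange_le_of_card_le
  have hsub : ({j | decRearrange u k * decRearrange v l < |u j * v j|} : Finset (Fin n)) ⊆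
      (filter (fun j => decRearrange u k < |u j|) univ ∪
        filter (fun j => decRearrange v l < |v j|) univ) := by
    intro j hj
    simp only [mem_filter, mem_union, mem_univ, true_and] at hj ⊢
    by_contra! hle
    exact hj.not_ge (abs_mul (u j) (v j) ▸
      mul_le_mul hle.1 hle.2 (abs_nonneg _) (decRearrange_nonneg u k))
  calc _ ≤ _ := card_le_card hsub
    _ ≤ _ := card_union_le _ _
    _ ≤ k + l := add_le_add (card_lt_decRearrange_le u k) (card_lt_decRearrange_le v l)
    _ ≤ i := hkl

end decRearrange

lemma decRearrange_le_rpow_neg_of_mul_le_one {n : ℕ} (x : Fin n → ℝ) (r : ℝ) (k : Fin n)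
    (hx : ((k : ℕ) + 1 : ℝ) ^ r * decRearrange x k ≤ 1) :
    decRearrange x k ≤ ((k : ℕ) + 1 : ℝ) ^ (-r) := by
  rwa [rpow_neg (by positivity), ← one_div, le_div_iff₀ (by positivity), mul_comm]

lemma decRearrange_rpow_neg_le {n : ℕ} {α : ℝ} (hα : 0 ≤ α) (k : Fin n) :
    decRearrange (fun j : Fin n => ((j : ℕ) + 1 : ℝ) ^ (-α)) k ≤ ((k : ℕ) + 1 : ℝ) ^ (-α) := by
  have habs (j : Fin n) : |((j : ℕ) + 1 : ℝ) ^ (-α)| = ((j : ℕ) + 1 : ℝ) ^ (-α) :=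
    abs_of_nonneg (rpow_nonneg (by positivity) _)
  refine (decRearrange_le_abs_of_antitone _ (fun a b hab => ?_) k).trans_eq (habs k)
  simp only [habs]
  exact rpow_le_rpow_of_nonpos (by positivity) (by exact_mod_cast Nat.succ_le_succ hab)
    (neg_nonpos.mpr hα)

/-- If `z` is in the unit ball of `ℓ_{p,∞}^{2^m}` and `1/β = α + 1/p`, then the
sequence `(i^{-α} z_i)` has `ℓ_{β,∞}`-quasi-norm at most `2^{1/β}`. -/
theorem stmt_14 (m : ℕ) (p α β : ℝ) (hp : 0 < p) (hα : 0 ≤ α) (hβ : 1 / β = α + 1 / p)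
    (z : Fin (2 ^ m) → ℝ)
    (hz : ∀ i : Fin (2 ^ m), ((i : ℕ) + 1 : ℝ) ^ (1 / p) * decRearrange z i ≤ 1) :
    ∀ i : Fin (2 ^ m),
      ((i : ℕ) + 1 : ℝ) ^ (1 / β) *
        decRearrange (fun j : Fin (2 ^ m) => ((j : ℕ) + 1 : ℝ) ^ (-α) * z j) i
      ≤ (2 : ℝ) ^ (1 / β) := by
  intro i
  set k : Fin (2 ^ m) := ⟨i / 2, (Nat.div_le_self _ _).trans_lt i.isLt⟩
  have hkR : (0 : ℝ) < (k : ℕ) + 1 := by positivity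
  have hprod := decRearrange_mul_le (fun j : Fin (2 ^ m) => ((j : ℕ) + 1 : ℝ) ^ (-α)) z
    (i := i) (k := k) (l := k) (by simp only [k]; omega)
  calc ((i : ℕ) + 1 : ℝ) ^ (1 / β) * _
      ≤ ((i : ℕ) + 1 : ℝ) ^ (1 / β) *
          (((k : ℕ) + 1 : ℝ) ^ (-α) * ((k : ℕ) + 1 : ℝ) ^ (-(1 / p))) := by
        gcongr
        exact hprod.trans (mul_le_mul (decRearrange_rpow_neg_le hα k)
          (decRearrange_le_rpow_neg_of_mul_le_one z _ k (hz k)) (decRearrange_nonneg _ _)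
          (by positivity))
    _ = (((i : ℕ) + 1 : ℝ) / ((k : ℕ) + 1 : ℝ)) ^ (1 / β) := by
        rw [← rpow_add hkR, ← neg_add, ← hβ, rpow_neg hkR.le, ← div_eq_mul_inv,
          div_rpow (by positivity) hkR.le]
    _ ≤ 2 ^ (1 / β) := by
        have hβpos : 0 < 1 / β := by rw [hβ]; positivity
        gcongr
        rw [div_le_iff₀ hkR]
        exact_mod_cast (show (i : ℕ) + 1 ≤ 2 * ((k : ℕ) + 1) by simp only [k]; omega)
end

section
/- Let ψ : [0,∞) → [0,∞) satisfy ψ(0) = 0 and ψ(t) > 0 for t > 0. Suppose both ψ and t ↦ t/ψ(t) are K-increasing for some K ≥ 1 (i.e. ψ(s) ≤ Kψ(t) and s/ψ(s) ≤ K t/ψ(t) whenever 0 ≤ s ≤ t). Then there exist a continuous, increasing, concave function Ψ on [0,∞) and absolute positive constants c₁, c₂ (independent of ψ and K) such that c₁ψ(t) ≤ Ψ(t) ≤ c₂K²ψ(t) for all t > 0. -/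
/-!
Take `Ψ t = K * inf_{s > 0} ψ s * (1 + t / s)`. As an infimum of lines with nonnegative
slope, `Ψ` is concave and increasing, hence continuous on `(0, ∞)`; at `0` it is continuous
because an increasing function is right-continuous wherever it is upper semicontinuous, as an
infimum of continuous functions is. The choice `s = t` gives `Ψ t ≤ 2 K² ψ t`. Conversely,
`ψ t ≤ K ψ s` for `t ≤ s`, while for `s ≤ t` the almost-monotonicity of `t / ψ t` gives
`ψ t ≤ K ψ s * (t / s)`; either way `ψ t ≤ K ψ s * (1 + t / s)`, so `ψ t ≤ Ψ t`.
-/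

open Set

lemma ConcaveOn.ciInf {ι E : Type*} [Nonempty ι] [AddCommMonoid E] [Module ℝ E] {s : Set E}
    {f : ι → E → ℝ} (hs : Convex ℝ s) (hf : ∀ i, ConcaveOn ℝ s (f i))
    (hbdd : ∀ x ∈ s, BddBelow (range fun i => f i x)) :
    ConcaveOn ℝ s fun x => ⨅ i, f i x := by
  refine ⟨hs, fun x hx y hy a b ha hb hab => le_ciInf fun i => ?_⟩
  calc a • (⨅ i, f i x) + b • (⨅ i, f i y) ≤ a • f i x + b • f i y := by
        gcongr
        · exact ciInf_le (hbdd x hx) i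
        · exact ciInf_le (hbdd y hy) i
    _ ≤ f i (a • x + b • y) := (hf i).2 hx hy ha hb hab

lemma MonotoneOn.continuousWithinAt_Ici_of_upperSemicontinuousWithinAt {α γ : Type*}
    [TopologicalSpace α] [Preorder α] [LinearOrder γ] [TopologicalSpace γ] [OrderTopology γ]
    {f : α → γ} {a : α} (hf : MonotoneOn f (Ici a))
    (husc : UpperSemicontinuousWithinAt f (Ici a) a) : ContinuousWithinAt f (Ici a) a :=
  continuousWithinAt_iff_lower_upperSemicontinuousWithinAt.2
    ⟨fun _ hy => eventually_nhdsWithin_of_forall fun _ hx =>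
      hy.trans_le (hf self_mem_Ici hx hx), husc⟩

noncomputable def concaveRegularization (ψ : ℝ → ℝ) (t : ℝ) : ℝ :=
  ⨅ s : Ioi (0 : ℝ), ψ s * (1 + t / s)

namespace concaveRegularization

variable {ψ : ℝ → ℝ}

lemma bddBelow (hψ : ∀ s > 0, 0 ≤ ψ s) {t : ℝ} (ht : 0 ≤ t) :
    BddBelow (range fun s : Ioi (0 : ℝ) => ψ s * (1 + t / s)) := by
  refine ⟨0, ?_⟩
  rintro _ ⟨⟨s, hs : 0 < s⟩, rfl⟩
  have := hψ s hs
  positivity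

lemma le_two_mul (hψ : ∀ s > 0, 0 ≤ ψ s) {t : ℝ} (ht : 0 < t) :
    concaveRegularization ψ t ≤ 2 * ψ t := by
  calc concaveRegularization ψ t ≤ ψ t * (1 + t / t) :=
        ciInf_le (bddBelow hψ ht.le) ⟨t, ht⟩
    _ = 2 * ψ t := by rw [div_self ht.ne']; ring

lemma apply_le_mul {K : ℝ} (hK : 0 < K) (hψ : ∀ s > 0, 0 < ψ s)
    (hinc : ∀ s t : ℝ, 0 ≤ s → s ≤ t → ψ s ≤ K * ψ t)
    (hinc' : ∀ s t : ℝ, 0 ≤ s → s ≤ t → s / ψ s ≤ K * (t / ψ t)) {t : ℝ}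
    (ht : 0 < t) : ψ t ≤ K * concaveRegularization ψ t := by
  rw [← div_le_iff₀' hK]
  refine le_ciInf fun ⟨s, (hs : 0 < s)⟩ => (div_le_iff₀' hK).2 ?_
  have hψs := hψ s hs
  rcases le_total t s with hts | hst
  · calc ψ t ≤ K * ψ s := hinc t s ht.le hts
      _ ≤ K * (ψ s * (1 + t / s)) := by
        gcongr
        exact le_mul_of_one_le_right hψs.le (le_add_of_nonneg_right (by positivity))
  · have hcross : s * ψ t ≤ K * t * ψ s := by
      have := hinc' s t hs.le hst
      rw [div_le_iff₀ hψs, mul_div_assoc', div_mul_eq_mul_div, le_div_iff₀ (hψ t ht)] at this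
      linarith
    calc ψ t ≤ K * (ψ s * (t / s)) := by
          rw [← mul_assoc, mul_div_assoc', le_div_iff₀ hs]
          linarith
      _ ≤ K * (ψ s * (1 + t / s)) := by gcongr; linarith

lemma monotoneOn (hψ : ∀ s > 0, 0 ≤ ψ s) : MonotoneOn (concaveRegularization ψ) (Ici 0) :=
  fun a ha _ _ hab => ciInf_mono (bddBelow hψ ha) fun s => by
    have : 0 ≤ ψ s := hψ s s.2
    have : (0 : ℝ) < s := s.2
    gcongr

lemma concaveOn (hψ : ∀ s > 0, 0 ≤ ψ s) : ConcaveOn ℝ (Ici 0) (concaveRegularization ψ) := by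
  refine ConcaveOn.ciInf (convex_Ici 0) (fun s => ?_) fun t ht => bddBelow hψ ht
  have hs : (0 : ℝ) < s := s.2
  have hslope : 0 ≤ ψ s / s := div_nonneg (hψ s hs) hs.le
  refine (((concaveOn_id (convex_Ici 0)).smul hslope).add_const (ψ s)).congr
    fun t _ => ?_
  simp only [Pi.add_apply, id, smul_eq_mul]
  field_simp
  ring

lemma continuousOn (hψ : ∀ s > 0, 0 ≤ ψ s) :
    ContinuousOn (concaveRegularization ψ) (Ici 0) := by
  refine (concaveOn hψ).continuousOn_Ici
    ((monotoneOn hψ).continuousWithinAt_Ici_of_upperSemicontinuousWithinAt ?_)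
  refine upperSemicontinuousWithinAt_ciInf
    (eventually_nhdsWithin_of_forall fun t ht => bddBelow hψ ht) fun s => ?_
  have hline : Continuous fun t : ℝ => ψ s * (1 + t / s) := by fun_prop
  exact hline.upperSemicontinuous.upperSemicontinuousWithinAt _ _

end concaveRegularization

open concaveRegularization in
/-- Every function `ψ` with `ψ` and `t ↦ t/ψ(t)` both `K`-increasing is equivalent,
with constants `c₁, c₂K²` (where `c₁, c₂` are absolute), to a continuous increasing
concave function `Ψ` on `[0,∞)`. -/
theorem stmt_16 :
    ∃ c₁ c₂ : ℝ, 0 < c₁ ∧ 0 < c₂ ∧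
      ∀ (ψ : ℝ → ℝ) (K : ℝ), 1 ≤ K →
        (∀ t ≥ (0:ℝ), 0 ≤ ψ t) → ψ 0 = 0 → (∀ t > (0:ℝ), 0 < ψ t) →
        (∀ s t : ℝ, 0 ≤ s → s ≤ t → ψ s ≤ K * ψ t) →
        (∀ s t : ℝ, 0 ≤ s → s ≤ t → s / ψ s ≤ K * (t / ψ t)) →
        ∃ Ψ : ℝ → ℝ,
          ContinuousOn Ψ (Set.Ici 0) ∧ MonotoneOn Ψ (Set.Ici 0) ∧
          ConcaveOn ℝ (Set.Ici 0) Ψ ∧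
          ∀ t > (0:ℝ), c₁ * ψ t ≤ Ψ t ∧ Ψ t ≤ c₂ * K ^ 2 * ψ t := by
  refine ⟨1, 2, one_pos, two_pos, fun ψ K hK _ _ hψpos hinc hinc' => ?_⟩
  have hψ : ∀ s > 0, 0 ≤ ψ s := fun s hs => (hψpos s hs).le
  have hK₀ : 0 < K := one_pos.trans_le hK
  refine ⟨fun t => K * concaveRegularization ψ t, continuousOn_const.mul (continuousOn hψ),
    fun a ha b hb hab => mul_le_mul_of_nonneg_left (monotoneOn hψ ha hb hab) hK₀.le,
    (concaveOn hψ).smul hK₀.le, fun t ht => ⟨?_, ?_⟩⟩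
  · rw [one_mul]
    exact apply_le_mul hK₀ hψpos hinc hinc' ht
  · calc K * concaveRegularization ψ t ≤ K * (2 * ψ t) := by gcongr; exact le_two_mul hψ ht
      _ ≤ K * (2 * ψ t) * K := le_mul_of_one_le_right (by have := hψ t ht; positivity) hK
      _ = 2 * K ^ 2 * ψ t := by ring
end

section
/- Let β > 0, 0 < ϑ < 1, and α_i = exp(−β (ln(i+1))^ϑ) for i ∈ ℕ. Then (α_i) is non-increasing and satisfies the doubling-type condition α_i/α_j ≤ (j/i)^{βϑ·log₂ e} for all 1 ≤ i ≤ j; in particular α_i ≤ 2^{βϑ log₂ e} α_{2i} for all i. -/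
open Real

/-- Key inequality via Bernoulli: `(ln(j+1))^ϑ ≤ (ln(i+1))^ϑ + ϑ·(1/ln 2)·ln(j/i)`. -/
lemma stmt_17_key (ϑ : ℝ) (hϑ0 : 0 < ϑ) (hϑ1 : ϑ < 1) (i j : ℕ) (hi : 1 ≤ i) (hij : i ≤ j) :
    (Real.log ((j : ℝ) + 1)) ^ ϑ ≤
      (Real.log ((i : ℝ) + 1)) ^ ϑ +
        ϑ * Real.logb 2 (Real.exp 1) * Real.log ((j : ℝ) / (i : ℝ)) := by
  have hi1 : (1 : ℝ) ≤ (i : ℝ) := by exact_mod_cast hi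
  have hij' : (i : ℝ) ≤ (j : ℝ) := by exact_mod_cast hij
  have hLi : Real.log 2 ≤ Real.log ((i : ℝ) + 1) :=
    Real.log_le_log (by norm_num) (by linarith)
  have hlog2 : (0 : ℝ) < Real.log 2 := Real.log_pos (by norm_num)
  have hLipos : 0 < Real.log ((i : ℝ) + 1) := lt_of_lt_of_le hlog2 hLi
  have hLij : Real.log ((i : ℝ) + 1) ≤ Real.log ((j : ℝ) + 1) :=
    Real.log_le_log (by linarith) (by linarith)
  set Li := Real.log ((i : ℝ) + 1) with hLidef
  set Lj := Real.log ((j : ℝ) + 1) with hLjdef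
  -- Bernoulli step: Lj^ϑ ≤ Li^ϑ + ϑ * Li^(ϑ-1) * (Lj - Li)
  have ht1 : (1 : ℝ) ≤ Lj / Li := (one_le_div hLipos).mpr hLij
  have hbern : (Lj / Li) ^ ϑ ≤ 1 + ϑ * (Lj / Li - 1) := by
    have := rpow_one_add_le_one_add_mul_self (s := Lj / Li - 1) (by linarith)
      hϑ0.le hϑ1.le
    simpa using this
  have hsplit : Lj ^ ϑ ≤ Li ^ ϑ + ϑ * Li ^ (ϑ - 1) * (Lj - Li) := by
    have hLj : Lj = Li * (Lj / Li) := by field_simp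
    calc Lj ^ ϑ = Li ^ ϑ * (Lj / Li) ^ ϑ := by
          rw [← Real.mul_rpow hLipos.le (by positivity)]; rw [← hLj]
      _ ≤ Li ^ ϑ * (1 + ϑ * (Lj / Li - 1)) :=
          mul_le_mul_of_nonneg_left hbern (by positivity)
      _ = Li ^ ϑ + ϑ * (Li ^ ϑ / Li) * (Lj - Li) := by
          field_simp
      _ = Li ^ ϑ + ϑ * Li ^ (ϑ - 1) * (Lj - Li) := by
          rw [Real.rpow_sub hLipos, Real.rpow_one]
  -- Li^(ϑ-1) ≤ (log 2)^(ϑ-1) ≤ (log 2)⁻¹ = logb 2 e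
  have h1 : Li ^ (ϑ - 1) ≤ (Real.log 2) ^ (ϑ - 1) :=
    Real.rpow_le_rpow_of_nonpos hlog2 hLi (by linarith)
  have h2 : (Real.log 2) ^ (ϑ - 1) ≤ (Real.log 2) ^ (-1 : ℝ) :=
    Real.rpow_le_rpow_of_exponent_ge hlog2 (by
      have := Real.log_le_sub_one_of_pos (show (0:ℝ) < 2 by norm_num)
      linarith) (by linarith)
  have hlogb : Real.logb 2 (Real.exp 1) = (Real.log 2) ^ (-1 : ℝ) := by
    rw [Real.rpow_neg_one, Real.logb, Real.log_exp]
    exact one_div _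
  have hLiC : Li ^ (ϑ - 1) ≤ Real.logb 2 (Real.exp 1) := by
    rw [hlogb]; exact h1.trans h2
  -- Lj - Li ≤ log (j/i)
  have hji : Lj - Li ≤ Real.log ((j : ℝ) / (i : ℝ)) := by
    rw [hLidef, hLjdef, ← Real.log_div (by linarith) (by linarith),
      Real.log_div (by linarith) (by linarith)]
    have h1 : Real.log (((j : ℝ) + 1) / ((i : ℝ) + 1)) ≤ Real.log ((j : ℝ) / (i : ℝ)) := by
      apply Real.log_le_log (by positivity)
      rw [div_le_div_iff₀ (by linarith) (by linarith)]
      nlinarith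
    rw [Real.log_div (by linarith) (by linarith)] at h1
    linarith [Real.log_div (show (j:ℝ)+1 ≠ 0 by linarith) (show (i:ℝ)+1 ≠ 0 by linarith)]
  have hLjLi : 0 ≤ Lj - Li := by linarith
  have hCpos : 0 < Real.logb 2 (Real.exp 1) := by
    rw [hlogb, Real.rpow_neg_one]; positivity
  calc Lj ^ ϑ ≤ Li ^ ϑ + ϑ * Li ^ (ϑ - 1) * (Lj - Li) := hsplit
    _ ≤ Li ^ ϑ + ϑ * Real.logb 2 (Real.exp 1) * Real.log ((j : ℝ) / (i : ℝ)) := by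
        have : ϑ * Li ^ (ϑ - 1) * (Lj - Li) ≤
            ϑ * Real.logb 2 (Real.exp 1) * Real.log ((j : ℝ) / (i : ℝ)) := by
          apply mul_le_mul (by nlinarith [Real.rpow_nonneg hLipos.le (ϑ-1) ]) hji hLjLi
          positivity
        linarith

/-- The sequence `α_i = exp(−β (ln(i+1))^ϑ)` is non-increasing and satisfies the
doubling-type condition `α_i/α_j ≤ (j/i)^{βϑ·log₂ e}`. -/
theorem stmt_17 (β ϑ : ℝ) (hβ : 0 < β) (hϑ0 : 0 < ϑ) (hϑ1 : ϑ < 1)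
    (a : ℕ → ℝ) (ha : ∀ i : ℕ, a i = Real.exp (-(β * (Real.log ((i : ℝ) + 1)) ^ ϑ))) :
    (∀ i j : ℕ, i ≤ j → a j ≤ a i) ∧
    (∀ i j : ℕ, 1 ≤ i → i ≤ j → a i / a j ≤ ((j : ℝ) / (i : ℝ)) ^ (β * ϑ * Real.logb 2 (Real.exp 1))) ∧
    (∀ i : ℕ, 1 ≤ i → a i ≤ 2 ^ (β * ϑ * Real.logb 2 (Real.exp 1)) * a (2 * i)) := by
  have hmono : ∀ i j : ℕ, i ≤ j → a j ≤ a i := by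
    intro i j hij
    rw [ha i, ha j, Real.exp_le_exp, neg_le_neg_iff]
    apply mul_le_mul_of_nonneg_left _ hβ.le
    apply Real.rpow_le_rpow (Real.log_nonneg (by push_cast; linarith [Nat.cast_nonneg (α := ℝ) i]))
      _ hϑ0.le
    exact Real.log_le_log (by positivity) (by exact_mod_cast by linarith)
  have hdoub : ∀ i j : ℕ, 1 ≤ i → i ≤ j →
      a i / a j ≤ ((j : ℝ) / (i : ℝ)) ^ (β * ϑ * Real.logb 2 (Real.exp 1)) := by
    intro i j hi hij
    have hipos : (0 : ℝ) < (i : ℝ) := by exact_mod_cast hi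
    have hjpos : (0 : ℝ) < (j : ℝ) := lt_of_lt_of_le hipos (by exact_mod_cast hij)
    have hkey := stmt_17_key ϑ hϑ0 hϑ1 i j hi hij
    rw [ha i, ha j, ← Real.exp_sub,
      Real.rpow_def_of_pos (show (0:ℝ) < (j:ℝ)/(i:ℝ) by positivity)
        (β * ϑ * Real.logb 2 (Real.exp 1)),
      Real.exp_le_exp]
    nlinarith
  refine ⟨hmono, hdoub, fun i hi => ?_⟩
  have h := hdoub i (2 * i) hi (by omega)
  have hipos : (0 : ℝ) < (i : ℝ) := by exact_mod_cast hi
  have h2 : ((2 * i : ℕ) : ℝ) / (i : ℝ) = 2 := by push_cast; field_simp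
  rw [h2] at h
  have haj : 0 < a (2 * i) := by rw [ha]; exact Real.exp_pos _
  rw [div_le_iff₀ haj] at h
  linarith
end

section
/- Let p ∈ (0,1], let M₁, M₂ be functions on [0,1] with M_i(t^{1/p}) Orlicz functions, φ_{M₁}, φ_{M₂} their fundamental functions, and let (α_i) be a non-increasing sequence of non-negative reals. For k ∈ ℕ define Θ(k) = max_{k ≤ n ≤ 2^{k−1}} α_n · φ_{M₂}(k/log₂(2n/k)) / φ_{M₁}(k/log₂(2n/k)) and Λ(k) = max_{1 ≤ s ≤ k} α_{k·2^{s−1}} · φ_{M₂}(k/s)/φ_{M₁}(k/s). Then 2^{−2/p} Λ(k) ≤ Θ(k) ≤ 2^{1/p} Λ(k). -/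
/-!
Write `L = log₂ (2n / k)`. The terms of `Θ` and `Λ` are compared through `s = ⌊L⌋` in one
direction and through `n = k 2^(s-1)` (or `n = 2^(k-1)` when this exceeds the range) in the
other. In both cases the indices of `α` are ordered the right way, `φ_{M₂}` is monotone, and
the arguments of `φ_{M₁}` differ by a factor at most `2`, resp. `4`, which costs at most
`2^(1/p)`, resp. `4^(1/p)`, by the `p`-convexity bound `φ(Ct) ≤ C^(1/p) φ(t)`. The factor `4`
comes from `log₂ k ≤ 3k/4`.
-/

open Real Set

theorem one_div_mem_Ioc {t : ℝ} (ht : 1 ≤ t) : 1 / t ∈ Ioc (0:ℝ) 1 :=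
  ⟨by positivity, (div_le_one (by positivity)).2 ht⟩

namespace Orlicz

variable {M Minv φ : ℝ → ℝ}

theorem mapsTo_inv (hcont : ContinuousOn M (Icc 0 1)) (hM0 : M 0 = 0) (hM1 : M 1 = 1)
    (hinv' : ∀ t ∈ Icc (0:ℝ) 1, Minv (M t) = t) : MapsTo Minv (Icc 0 1) (Icc 0 1) := by
  intro u hu
  obtain ⟨x, hx, rfl⟩ := intermediate_value_Icc zero_le_one hcont (by rwa [hM0, hM1])
  rwa [hinv' x hx]

theorem monotoneOn_inv (hmaps : MapsTo Minv (Icc 0 1) (Icc 0 1))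
    (hmono : StrictMonoOn M (Icc 0 1)) (hinv : ∀ t ∈ Icc (0:ℝ) 1, M (Minv t) = t) :
    MonotoneOn Minv (Icc 0 1) := fun a ha b hb hab =>
  (hmono.le_iff_le (hmaps ha) (hmaps hb)).1 (by rwa [hinv a ha, hinv b hb])

theorem inv_apply_pos (hmaps : MapsTo Minv (Icc 0 1) (Icc 0 1)) (hM0 : M 0 = 0)
    (hinv : ∀ t ∈ Icc (0:ℝ) 1, M (Minv t) = t) {u : ℝ} (hu : u ∈ Ioc 0 1) : 0 < Minv u := by
  refine (hmaps (Ioc_subset_Icc_self hu)).1.lt_of_ne fun h => hu.1.ne ?_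
  rw [← hinv u (Ioc_subset_Icc_self hu), ← h, hM0]

theorem rpow_mul_inv_le_inv_mul {p : ℝ} (hp : 0 < p) (hmaps : MapsTo Minv (Icc 0 1) (Icc 0 1))
    (hmono : StrictMonoOn M (Icc 0 1)) (hconv : ConvexOn ℝ (Icc 0 1) (fun t => M (t ^ (1 / p))))
    (hM0 : M 0 = 0) (hinv : ∀ t ∈ Icc (0:ℝ) 1, M (Minv t) = t) {l u : ℝ}
    (hl : l ∈ Icc (0:ℝ) 1) (hu : u ∈ Icc (0:ℝ) 1) : l ^ (1 / p) * Minv u ≤ Minv (l * u) := by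
  set x := Minv u
  have hx := hmaps hu
  have hxp : x ^ p ∈ Icc (0:ℝ) 1 := ⟨rpow_nonneg hx.1 p, rpow_le_one hx.1 hx.2 hp.le⟩
  have hxpx : (x ^ p) ^ (1 / p) = x := by
    rw [← rpow_mul hx.1, mul_one_div_cancel hp.ne', rpow_one]
  -- convexity of `t ↦ M (t ^ (1 / p))` on the segment from `0` to `x ^ p`
  have hconv_at : M (l ^ (1 / p) * x) ≤ l * u := by
    have h := hconv.2 hxp (left_mem_Icc.2 zero_le_one) hl.1 (sub_nonneg.2 hl.2) (add_sub_cancel l 1)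
    simp only [smul_eq_mul, mul_zero, add_zero] at h
    rwa [mul_rpow hl.1 hxp.1, hxpx, zero_rpow (one_div_pos.2 hp).ne', hM0, mul_zero, add_zero,
      hinv u hu] at h
  have hlx : l ^ (1 / p) * x ∈ Icc (0:ℝ) 1 :=
    ⟨mul_nonneg (rpow_nonneg hl.1 _) hx.1,
      mul_le_one₀ (rpow_le_one hl.1 hl.2 (one_div_pos.2 hp).le) hx.1 hx.2⟩
  have hlu : l * u ∈ Icc (0:ℝ) 1 := ⟨mul_nonneg hl.1 hu.1, mul_le_one₀ hl.2 hu.1 hu.2⟩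
  by_contra! hlt
  have := hmono (hmaps hlu) hlx hlt
  rw [hinv _ hlu] at this
  linarith

theorem fundamental_pos (hmaps : MapsTo Minv (Icc 0 1) (Icc 0 1)) (hM0 : M 0 = 0)
    (hinv : ∀ t ∈ Icc (0:ℝ) 1, M (Minv t) = t) (hφ : ∀ t ≥ (1:ℝ), φ t = 1 / Minv (1 / t))
    ⦃t : ℝ⦄ (ht : 1 ≤ t) : 0 < φ t := by
  rw [hφ t ht]
  exact one_div_pos.2 (inv_apply_pos hmaps hM0 hinv (one_div_mem_Ioc ht))

theorem fundamental_monotoneOn (hmaps : MapsTo Minv (Icc 0 1) (Icc 0 1))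
    (hmono : StrictMonoOn M (Icc 0 1)) (hM0 : M 0 = 0)
    (hinv : ∀ t ∈ Icc (0:ℝ) 1, M (Minv t) = t) (hφ : ∀ t ≥ (1:ℝ), φ t = 1 / Minv (1 / t)) :
    MonotoneOn φ (Ici 1) := by
  intro t (ht : 1 ≤ t) t' (ht' : 1 ≤ t') htt'
  rw [hφ t ht, hφ t' ht']
  exact one_div_le_one_div_of_le (inv_apply_pos hmaps hM0 hinv (one_div_mem_Ioc ht'))
    (monotoneOn_inv hmaps hmono hinv (Ioc_subset_Icc_self (one_div_mem_Ioc ht'))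
      (Ioc_subset_Icc_self (one_div_mem_Ioc ht)) (one_div_le_one_div_of_le (by linarith) htt'))

theorem fundamental_mul_le {p : ℝ} (hp : 0 < p) (hmaps : MapsTo Minv (Icc 0 1) (Icc 0 1))
    (hmono : StrictMonoOn M (Icc 0 1)) (hconv : ConvexOn ℝ (Icc 0 1) (fun t => M (t ^ (1 / p))))
    (hM0 : M 0 = 0) (hinv : ∀ t ∈ Icc (0:ℝ) 1, M (Minv t) = t)
    (hφ : ∀ t ≥ (1:ℝ), φ t = 1 / Minv (1 / t)) ⦃t C : ℝ⦄ (ht : 1 ≤ t) (hC : 1 ≤ C) :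
    φ (C * t) ≤ C ^ (1 / p) * φ t := by
  have hCt : 1 ≤ C * t := one_le_mul_of_one_le_of_one_le hC ht
  have key := rpow_mul_inv_le_inv_mul hp hmaps hmono hconv hM0 hinv
    (Ioc_subset_Icc_self (one_div_mem_Ioc hC)) (Ioc_subset_Icc_self (one_div_mem_Ioc ht))
  rw [one_div_mul_one_div, div_rpow zero_le_one (by linarith), one_rpow, one_div_mul_eq_div] at key
  rw [hφ t ht, hφ _ hCt, mul_one_div,
    one_div_le (inv_apply_pos hmaps hM0 hinv (one_div_mem_Ioc hCt))
      (div_pos (by positivity) (inv_apply_pos hmaps hM0 hinv (one_div_mem_Ioc ht))), one_div_div]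
  exact key

end Orlicz

theorem div_le_rpow_mul_div {φ₁ φ₂ : ℝ → ℝ} {r : ℝ} (hr : 0 ≤ r)
    (hφ₁pos : ∀ ⦃t⦄, 1 ≤ t → 0 < φ₁ t)
    (hφ₁mul : ∀ ⦃t C⦄, 1 ≤ t → 1 ≤ C → φ₁ (C * t) ≤ C ^ r * φ₁ t)
    (hφ₂nonneg : ∀ ⦃t⦄, 1 ≤ t → 0 ≤ φ₂ t) (hφ₂mono : MonotoneOn φ₂ (Ici 1))
    ⦃a a' k x y c : ℝ⦄ (ha : 0 ≤ a) (haa' : a ≤ a') (hx : 0 < x) (hxy : x ≤ y)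
    (hyc : y ≤ c * x) (hyk : y ≤ k) :
    a * φ₂ (k / y) / φ₁ (k / y) ≤ c ^ r * (a' * φ₂ (k / x) / φ₁ (k / x)) := by
  have hy : 0 < y := hx.trans_le hxy
  have ht : 1 ≤ k / y := (one_le_div hy).2 hyk
  have ht' : 1 ≤ k / x := ht.trans (div_le_div_of_nonneg_left (by linarith) hx hxy)
  have hφ₁ : φ₁ (k / x) ≤ c ^ r * φ₁ (k / y) := calc
    φ₁ (k / x) = φ₁ (y / x * (k / y)) := by field_simp
    _ ≤ (y / x) ^ r * φ₁ (k / y) := hφ₁mul ht ((one_le_div hx).2 hxy)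
    _ ≤ c ^ r * φ₁ (k / y) := by
      gcongr
      · exact (hφ₁pos ht).le
      · exact (div_le_iff₀ hx).2 hyc
  have hcr : 0 < c ^ r := rpow_pos_of_pos (by nlinarith) r
  calc a * φ₂ (k / y) / φ₁ (k / y) ≤ a' * φ₂ (k / x) / φ₁ (k / y) := by
        gcongr
        · exact (hφ₁pos ht).le
        · exact hφ₂nonneg ht
        · exact ha.trans haa'
        · exact hφ₂mono ht ht' (div_le_div_of_nonneg_left (by linarith) hx hxy)
    _ = c ^ r * (a' * φ₂ (k / x)) / (c ^ r * φ₁ (k / y)) := by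
        rw [mul_div_mul_left _ _ hcr.ne']
    _ ≤ c ^ r * (a' * φ₂ (k / x)) / φ₁ (k / x) := by
        gcongr
        · exact mul_nonneg hcr.le (mul_nonneg (ha.trans haa') (hφ₂nonneg ht'))
        · exact hφ₁pos ht'
    _ = c ^ r * (a' * φ₂ (k / x) / φ₁ (k / x)) := mul_div_assoc _ _ _

theorem Real.four_mul_logb_two_le {x : ℝ} (hx : 0 < x) : 4 * logb 2 x ≤ 3 * x := by
  have hlog : log x ≤ x / exp 1 := by
    have := log_le_sub_one_of_pos (div_pos hx (exp_pos 1))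
    rw [log_div hx.ne' (exp_pos 1).ne', log_exp] at this
    linarith
  have hconst : 4 < 3 * log 2 * exp 1 := by nlinarith [exp_one_gt_d9, log_two_gt_d9]
  rw [logb, ← mul_div_assoc, div_le_iff₀ (log_pos one_lt_two)]
  rw [le_div_iff₀ (exp_pos 1)] at hlog
  nlinarith [mul_pos hx (sub_pos.2 hconst), exp_pos 1]

theorem Real.logb_two_two_pow (m : ℕ) : logb 2 ((2:ℝ) ^ m) = m := by
  rw [← rpow_natCast, logb_rpow two_pos (by norm_num)]

theorem Nat.le_two_pow_pred {k : ℕ} (hk : 1 ≤ k) : k ≤ 2 ^ (k - 1) := by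
  have := Nat.lt_two_pow_self (n := k - 1)
  omega

theorem le_logb_two_mul_div_iff {k n s : ℕ} (hk : 0 < k) (hn : 0 < n) (hs : 1 ≤ s) :
    (s : ℝ) ≤ logb 2 (2 * n / k) ↔ k * 2 ^ (s - 1) ≤ n := by
  rw [le_logb_iff_rpow_le one_lt_two (by positivity), rpow_natCast, le_div_iff₀ (by positivity),
    ← mul_pow_sub_one (by omega) (2:ℝ), mul_right_comm, mul_assoc,
    mul_le_mul_iff_of_pos_left two_pos]
  norm_cast

theorem logb_two_mul_div_mem_Icc {k n : ℕ} (hk : 1 ≤ k) (hkn : k ≤ n) (hn : n ≤ 2 ^ (k - 1)) :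
    logb 2 (2 * n / k) ∈ Icc (1:ℝ) k := by
  have hn0 : 0 < n := by omega
  have h1 := (le_logb_two_mul_div_iff (s := 1) hk hn0 le_rfl).2 (by simpa using hkn)
  refine ⟨by exact_mod_cast h1, ?_⟩
  rw [logb_le_iff_le_rpow one_lt_two (by positivity), rpow_natCast, div_le_iff₀ (by positivity),
    ← mul_pow_sub_one (by omega) (2:ℝ)]
  have hn' : (n:ℝ) ≤ 2 ^ (k - 1) := by exact_mod_cast hn
  have hk' : (1:ℝ) ≤ k := by exact_mod_cast hk
  nlinarith [pow_pos (two_pos : (0:ℝ) < 2) (k - 1)]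

theorem exists_le_logb_two_mul_div {k n : ℕ} (hk : 1 ≤ k) (hkn : k ≤ n) (hn : n ≤ 2 ^ (k - 1)) :
    ∃ s : ℕ, 1 ≤ s ∧ s ≤ k ∧ k * 2 ^ (s - 1) ≤ n ∧
      (s : ℝ) ≤ logb 2 (2 * n / k) ∧ logb 2 (2 * n / k) ≤ 2 * s := by
  obtain ⟨hL1, hLk⟩ := logb_two_mul_div_mem_Icc hk hkn hn
  have hs1 : 1 ≤ ⌊logb 2 (2 * n / k)⌋₊ := Nat.le_floor (by simpa using hL1)
  have hsL := Nat.floor_le (zero_le_one.trans hL1)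
  refine ⟨_, hs1, Nat.floor_le_of_le hLk, (le_logb_two_mul_div_iff hk (by omega) hs1).1 hsL,
    hsL, ?_⟩
  have : (1:ℝ) ≤ ⌊logb 2 (2 * n / k)⌋₊ := by exact_mod_cast hs1
  linarith [Nat.lt_floor_add_one (logb 2 (2 * n / k))]

theorem exists_logb_two_mul_div_le {k s : ℕ} (hs : 1 ≤ s) (hsk : s ≤ k) :
    ∃ n : ℕ, k ≤ n ∧ n ≤ 2 ^ (k - 1) ∧ n ≤ k * 2 ^ (s - 1) ∧
      logb 2 (2 * n / k) ≤ s ∧ (s : ℝ) ≤ 4 * logb 2 (2 * n / k) := by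
  have hk : 1 ≤ k := hs.trans hsk
  have hk0 : (0:ℝ) < k := by exact_mod_cast hk
  by_cases h : k * 2 ^ (s - 1) ≤ 2 ^ (k - 1)
  · have hL : logb 2 (2 * ((k * 2 ^ (s - 1) : ℕ) : ℝ) / k) = s := by
      push_cast
      rw [mul_left_comm, mul_div_cancel_left₀ _ hk0.ne', mul_pow_sub_one (by omega) (2:ℝ),
        Real.logb_two_two_pow]
    refine ⟨_, Nat.le_mul_of_pos_right k (by positivity), h, le_rfl, hL.le, ?_⟩
    rw [hL]
    linarith [(Nat.cast_nonneg s : (0:ℝ) ≤ s)]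
  · rw [not_le] at h
    have hL : logb 2 (2 * ((2 ^ (k - 1) : ℕ) : ℝ) / k) = k - logb 2 k := by
      push_cast
      rw [mul_pow_sub_one (by omega) (2:ℝ), logb_div (by positivity) hk0.ne', Real.logb_two_two_pow]
    have hLs := (le_logb_two_mul_div_iff (n := 2 ^ (k - 1)) (by omega) (by positivity) hs).not.2
      (not_le.2 h)
    refine ⟨_, Nat.le_two_pow_pred hk, le_rfl, h.le, (not_le.1 hLs).le, ?_⟩
    have hsk' : (s:ℝ) ≤ k := by exact_mod_cast hsk
    rw [hL]
    linarith [Real.four_mul_logb_two_le hk0]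

theorem bddAbove_setOf_exists_eq {β : Type*} [SemilatticeSup β] [Nonempty β] (f : ℕ → β)
    (a b : ℕ) : BddAbove {v : β | ∃ n : ℕ, a ≤ n ∧ n ≤ b ∧ v = f n} :=
  ((finite_Icc a b).image f).bddAbove.mono (by rintro _ ⟨n, h1, h2, rfl⟩; exact ⟨n, ⟨h1, h2⟩, rfl⟩)

theorem Real.sSup_le_mul_sSup {S T : Set ℝ} {c : ℝ} (hc : 0 ≤ c) (hS : S.Nonempty)
    (hT : BddAbove T) (h : ∀ x ∈ S, ∃ y ∈ T, x ≤ c * y) : sSup S ≤ c * sSup T :=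
  csSup_le hS fun x hx =>
    let ⟨_, hy, hxy⟩ := h x hx
    hxy.trans (mul_le_mul_of_nonneg_left (le_csSup hT hy) hc)

theorem stmt_19_general (p : ℝ) (hp0 : 0 < p) (M₁ M₂ Minv₁ Minv₂ : ℝ → ℝ)
    (hcont₁ : ContinuousOn M₁ (Set.Icc 0 1)) (hcont₂ : ContinuousOn M₂ (Set.Icc 0 1))
    (hmono₁ : StrictMonoOn M₁ (Set.Icc 0 1)) (hmono₂ : StrictMonoOn M₂ (Set.Icc 0 1))
    (hconv₁ : ConvexOn ℝ (Set.Icc 0 1) (fun t => M₁ (t ^ (1 / p))))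
    (hM₁0 : M₁ 0 = 0) (hM₁1 : M₁ 1 = 1) (hM₂0 : M₂ 0 = 0) (hM₂1 : M₂ 1 = 1)
    (hinv₁ : ∀ t ∈ Set.Icc (0:ℝ) 1, M₁ (Minv₁ t) = t)
    (hinv₁' : ∀ t ∈ Set.Icc (0:ℝ) 1, Minv₁ (M₁ t) = t)
    (hinv₂ : ∀ t ∈ Set.Icc (0:ℝ) 1, M₂ (Minv₂ t) = t)
    (hinv₂' : ∀ t ∈ Set.Icc (0:ℝ) 1, Minv₂ (M₂ t) = t)
    (φ₁ φ₂ : ℝ → ℝ)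
    (hφ₁ : ∀ t ≥ (1:ℝ), φ₁ t = 1 / Minv₁ (1 / t))
    (hφ₂ : ∀ t ≥ (1:ℝ), φ₂ t = 1 / Minv₂ (1 / t))
    (α : ℕ → ℝ) (hα0 : ∀ i, 0 ≤ α i) (hαmono : ∀ i j : ℕ, i ≤ j → α j ≤ α i)
    (k : ℕ) (hk : 1 ≤ k)
    (Θ Λ : ℝ)
    (hΘ : Θ = sSup {v : ℝ | ∃ n : ℕ, k ≤ n ∧ n ≤ 2 ^ (k - 1) ∧
      v = α n * φ₂ ((k : ℝ) / Real.logb 2 (2 * (n : ℝ) / (k : ℝ))) /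
            φ₁ ((k : ℝ) / Real.logb 2 (2 * (n : ℝ) / (k : ℝ)))})
    (hΛ : Λ = sSup {v : ℝ | ∃ s : ℕ, 1 ≤ s ∧ s ≤ k ∧
      v = α (k * 2 ^ (s - 1)) * φ₂ ((k : ℝ) / (s : ℝ)) / φ₁ ((k : ℝ) / (s : ℝ))}) :
    (2 : ℝ) ^ (-(2 / p)) * Λ ≤ Θ ∧ Θ ≤ (2 : ℝ) ^ (1 / p) * Λ := by
  have hmaps₁ := Orlicz.mapsTo_inv hcont₁ hM₁0 hM₁1 hinv₁'
  have hmaps₂ := Orlicz.mapsTo_inv hcont₂ hM₂0 hM₂1 hinv₂'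
  have hcompare := div_le_rpow_mul_div (one_div_pos.2 hp0).le
    (Orlicz.fundamental_pos hmaps₁ hM₁0 hinv₁ hφ₁)
    (Orlicz.fundamental_mul_le hp0 hmaps₁ hmono₁ hconv₁ hM₁0 hinv₁ hφ₁)
    (fun _ ht ↦ (Orlicz.fundamental_pos hmaps₂ hM₂0 hinv₂ hφ₂ ht).le)
    (Orlicz.fundamental_monotoneOn hmaps₂ hmono₂ hM₂0 hinv₂ hφ₂)
  have h4 : (4:ℝ) ^ (1 / p) = 2 ^ (2 / p) := by
    rw [show (4:ℝ) = 2 ^ (2:ℝ) by norm_num, ← rpow_mul zero_le_two, mul_one_div]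
  constructor
  · rw [rpow_neg zero_le_two, inv_mul_le_iff₀ (by positivity), ← h4, hΘ, hΛ]
    refine Real.sSup_le_mul_sSup (by positivity) ⟨_, 1, le_rfl, hk, rfl⟩
      (bddAbove_setOf_exists_eq _ _ _) ?_
    rintro _ ⟨s, hs, hsk, rfl⟩
    obtain ⟨n, hkn, hn, hns, hLs, hsL⟩ := exists_logb_two_mul_div_le hs hsk
    exact ⟨_, ⟨n, hkn, hn, rfl⟩, hcompare (hα0 _) (hαmono _ _ hns)
      (zero_lt_one.trans_le (logb_two_mul_div_mem_Icc hk hkn hn).1) hLs hsL (by exact_mod_cast hsk)⟩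
  · rw [hΘ, hΛ]
    refine Real.sSup_le_mul_sSup (by positivity) ⟨_, k, le_rfl, Nat.le_two_pow_pred hk, rfl⟩
      (bddAbove_setOf_exists_eq _ _ _) ?_
    rintro _ ⟨n, hkn, hn, rfl⟩
    obtain ⟨s, hs, hsk, hsn, hsL, hLs⟩ := exists_le_logb_two_mul_div hk hkn hn
    exact ⟨_, ⟨s, hs, hsk, rfl⟩, hcompare (hα0 _) (hαmono _ _ hsn) (by exact_mod_cast hs) hsL hLs
      (logb_two_mul_div_mem_Icc hk hkn hn).2⟩

/-- Equivalence `2^{-2/p} Λ(k) ≤ Θ(k) ≤ 2^{1/p} Λ(k)` of the two extremal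
quantities controlling entropy numbers of diagonal operators between Orlicz
sequence spaces. -/
theorem stmt_19 (p : ℝ) (hp0 : 0 < p) (hp1 : p ≤ 1) (M₁ M₂ Minv₁ Minv₂ : ℝ → ℝ)
    (hcont₁ : ContinuousOn M₁ (Set.Icc 0 1)) (hcont₂ : ContinuousOn M₂ (Set.Icc 0 1))
    (hmono₁ : StrictMonoOn M₁ (Set.Icc 0 1)) (hmono₂ : StrictMonoOn M₂ (Set.Icc 0 1))
    (hconv₁ : ConvexOn ℝ (Set.Icc 0 1) (fun t => M₁ (t ^ (1 / p))))
    (hconv₂ : ConvexOn ℝ (Set.Icc 0 1) (fun t => M₂ (t ^ (1 / p))))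
    (hM₁0 : M₁ 0 = 0) (hM₁1 : M₁ 1 = 1) (hM₂0 : M₂ 0 = 0) (hM₂1 : M₂ 1 = 1)
    (hinv₁ : ∀ t ∈ Set.Icc (0:ℝ) 1, M₁ (Minv₁ t) = t)
    (hinv₁' : ∀ t ∈ Set.Icc (0:ℝ) 1, Minv₁ (M₁ t) = t)
    (hinv₂ : ∀ t ∈ Set.Icc (0:ℝ) 1, M₂ (Minv₂ t) = t)
    (hinv₂' : ∀ t ∈ Set.Icc (0:ℝ) 1, Minv₂ (M₂ t) = t)
    (φ₁ φ₂ : ℝ → ℝ)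
    (hφ₁ : ∀ t ≥ (1:ℝ), φ₁ t = 1 / Minv₁ (1 / t))
    (hφ₂ : ∀ t ≥ (1:ℝ), φ₂ t = 1 / Minv₂ (1 / t))
    (α : ℕ → ℝ) (hα0 : ∀ i, 0 ≤ α i) (hαmono : ∀ i j : ℕ, i ≤ j → α j ≤ α i)
    (k : ℕ) (hk : 1 ≤ k)
    (Θ Λ : ℝ)
    (hΘ : Θ = sSup {v : ℝ | ∃ n : ℕ, k ≤ n ∧ n ≤ 2 ^ (k - 1) ∧
      v = α n * φ₂ ((k : ℝ) / Real.logb 2 (2 * (n : ℝ) / (k : ℝ))) /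
            φ₁ ((k : ℝ) / Real.logb 2 (2 * (n : ℝ) / (k : ℝ)))})
    (hΛ : Λ = sSup {v : ℝ | ∃ s : ℕ, 1 ≤ s ∧ s ≤ k ∧
      v = α (k * 2 ^ (s - 1)) * φ₂ ((k : ℝ) / (s : ℝ)) / φ₁ ((k : ℝ) / (s : ℝ))}) :
    (2 : ℝ) ^ (-(2 / p)) * Λ ≤ Θ ∧ Θ ≤ (2 : ℝ) ^ (1 / p) * Λ :=
  stmt_19_general p hp0 M₁ M₂ Minv₁ Minv₂ hcont₁ hcont₂ hmono₁ hmono₂ hconv₁ hM₁0 hM₁1 hM₂0 hM₂1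
    hinv₁ hinv₁' hinv₂ hinv₂' φ₁ φ₂ hφ₁ hφ₂ α hα0 hαmono k hk Θ Λ hΘ hΛ
end
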